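/- arXiv:1308.3889 — 3 statements merged into one kernel-verified Lean document; each statement's English description precedes it below -/
import Mathlib

section
/- Let γ ∈ [0,1]. For every v ∈ ℝ³ with v ≠ 0, the matrix ā(v) = (a*μ)(v) satisfies: ā(v) v = ℓ₁(v) v, and ā(v) ξ = ℓ₂(v) ξ for every ξ ∈ ℝ³ with ξ · v = 0, where ℓ₁(v) := ∫_{ℝ³} (1 − ((v/|v|)·(w/|w|))²) |w|^{γ+2} μ(v−w) dw and ℓ₂(v) := ∫_{ℝ³} (1 − ½ |(v/|v|) × (w/|w|)|²) |w|^{γ+2} μ(v−w) dw. In particular, for all ξ ∈ ℝ³, ā_{ij}(v) ξ_i ξ_j = ℓ₁(v) |P_v ξ|² + ℓ₂(v) |(I − P_v) ξ|², where P_v ξ := (ξ · v/|v|) v/|v|. -/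
open MeasureTheory Real Filter

noncomputable section

abbrev E3 : Type := EuclideanSpace ℝ (Fin 3)

/-- The standard Gaussian on ℝ³. -/
def gauss (v : E3) : ℝ :=
  (2 * π) ^ (-(3 : ℝ) / 2) * Real.exp (-‖v‖ ^ 2 / 2)

/-- `J_α(v) = ∫ |v - w|^α μ(w) dw`. -/
def Jfun (α : ℝ) (v : E3) : ℝ :=
  ∫ w : E3, ‖v - w‖ ^ α * gauss w

/-- The matrix `a_{ij}(z) = |z|^{γ+2} (δ_{ij} - z_i z_j / |z|²)` (equal to `0` at `z = 0`). -/
def amat (γ : ℝ) (z : E3) (i j : Fin 3) : ℝ :=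
  ‖z‖ ^ (γ + 2) * ((if i = j then (1 : ℝ) else 0) - z i * z j / ‖z‖ ^ 2)

/-- The entrywise convolution `ā = a * μ`. -/
def abar (γ : ℝ) (v : E3) (i j : Fin 3) : ℝ :=
  ∫ w : E3, amat γ (v - w) i j * gauss w

/-- The eigenvalue `ℓ₁(v)` of `ā(v)` in the direction `v`. -/
def ell1 (γ : ℝ) (v : E3) : ℝ :=
  ∫ w : E3, (1 - (∑ i, (v i / ‖v‖) * (w i / ‖w‖)) ^ 2) * ‖w‖ ^ (γ + 2) * gauss (v - w)

/-- Squared norm of the cross product of two vectors of ℝ³. -/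
def crossSq (u w : Fin 3 → ℝ) : ℝ :=
  (u 1 * w 2 - u 2 * w 1) ^ 2 + (u 2 * w 0 - u 0 * w 2) ^ 2 + (u 0 * w 1 - u 1 * w 0) ^ 2

/-- The eigenvalue `ℓ₂(v)` of `ā(v)` on `v^⊥`. -/
def ell2 (γ : ℝ) (v : E3) : ℝ :=
  ∫ w : E3, (1 - (1 / 2) * crossSq (fun i => v i / ‖v‖) (fun i => w i / ‖w‖)) *
    ‖w‖ ^ (γ + 2) * gauss (v - w)


namespace Stmt4Aux

noncomputable section

open MeasureTheory Real

/-! ### Coordinate algebra on `E3` -/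

def dot3 (u w : Fin 3 → ℝ) : ℝ := u 0 * w 0 + u 1 * w 1 + u 2 * w 2

lemma sum_mul_eq_dot3 (u w : Fin 3 → ℝ) : (∑ i, u i * w i) = dot3 u w := by
  simp [Fin.sum_univ_three, dot3]

def Sfun (b : E3) (w : E3) : E3 :=
  (WithLp.equiv 2 (Fin 3 → ℝ)).symm
    ![dot3 b w * b 0 + (b 1 * w 2 - b 2 * w 1),
      dot3 b w * b 1 + (b 2 * w 0 - b 0 * w 2),
      dot3 b w * b 2 + (b 0 * w 1 - b 1 * w 0)]

lemma Sfun_a0 (b w : E3) : Sfun b w 0 = dot3 b w * b 0 + (b 1 * w 2 - b 2 * w 1) := rfl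
lemma Sfun_a1 (b w : E3) : Sfun b w 1 = dot3 b w * b 1 + (b 2 * w 0 - b 0 * w 2) := rfl
lemma Sfun_a2 (b w : E3) : Sfun b w 2 = dot3 b w * b 2 + (b 0 * w 1 - b 1 * w 0) := rfl

lemma coord_abs_le (v : E3) (i : Fin 3) : |v i| ≤ ‖v‖ := by
  rw [EuclideanSpace.norm_eq]
  calc |v i| = Real.sqrt (‖v i‖ ^ 2) := by
        rw [Real.norm_eq_abs, sq_abs, Real.sqrt_sq_eq_abs]
    _ ≤ _ := Real.sqrt_le_sqrt (Finset.single_le_sum (f := fun j => ‖v j‖ ^ 2)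
        (fun _ _ => sq_nonneg _) (Finset.mem_univ i))

lemma norm_sq3 (w : E3) : ‖w‖ ^ 2 = dot3 w w := by
  rw [EuclideanSpace.norm_eq, Real.sq_sqrt (Finset.sum_nonneg fun _ _ => sq_nonneg _)]
  simp only [Fin.sum_univ_three, Real.norm_eq_abs, sq_abs, dot3]
  ring

lemma cauchy3 (b w : Fin 3 → ℝ) : (dot3 b w) ^ 2 ≤ dot3 b b * dot3 w w := by
  simp only [dot3]
  nlinarith [sq_nonneg (b 0 * w 1 - b 1 * w 0), sq_nonneg (b 1 * w 2 - b 2 * w 1),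
    sq_nonneg (b 2 * w 0 - b 0 * w 2)]

/-! ### Unconditional polynomial identities for `Sfun` -/

lemma U2 (b w : E3) : dot3 b (Sfun b w) = dot3 b b * dot3 b w := by
  simp only [dot3, Sfun_a0, Sfun_a1, Sfun_a2]; ring

lemma U3 (b w : E3) : dot3 (Sfun b w) (Sfun b w)
    = dot3 b b * (dot3 b w) ^ 2 + dot3 b b * dot3 w w - (dot3 b w) ^ 2 := by
  simp only [dot3, Sfun_a0, Sfun_a1, Sfun_a2]; ring

lemma U4 (b w : E3) (i : Fin 3) : Sfun b (Sfun b w) i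
    = dot3 b b * dot3 b w * b i + dot3 b w * b i - dot3 b b * w i := by
  fin_cases i <;>
    simp only [Fin.zero_eta, Fin.mk_one, Fin.reduceFinMk, dot3, Sfun_a0, Sfun_a1, Sfun_a2] <;>
    ring

lemma U5 (b w ξ : E3) : dot3 (Sfun b (Sfun b w)) ξ
    = dot3 b b * dot3 b w * dot3 b ξ + dot3 b w * dot3 b ξ - dot3 b b * dot3 w ξ := by
  simp only [dot3, Sfun_a0, Sfun_a1, Sfun_a2]; ring

lemma U6 (b w : E3) (i : Fin 3) : Sfun b (Sfun b (Sfun b w)) i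
    = dot3 b w * (dot3 b b) ^ 2 * b i - dot3 b b * (Sfun b w i - dot3 b w * b i) := by
  fin_cases i <;>
    simp only [Fin.zero_eta, Fin.mk_one, Fin.reduceFinMk, dot3, Sfun_a0, Sfun_a1, Sfun_a2] <;>
    ring

lemma U7 (b w ξ : E3) : dot3 (Sfun b (Sfun b (Sfun b w))) ξ
    = dot3 b w * (dot3 b b) ^ 2 * dot3 b ξ
      - dot3 b b * (dot3 (Sfun b w) ξ - dot3 b w * dot3 b ξ) := by
  simp only [dot3, Sfun_a0, Sfun_a1, Sfun_a2]; ring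

lemma UCORE (b w ξ : E3) (i : Fin 3) :
    w i * dot3 w ξ + Sfun b w i * dot3 (Sfun b w) ξ
    = dot3 b w * b i * (dot3 w ξ + dot3 (Sfun b w) ξ)
      + (dot3 b b * dot3 w w - (dot3 b w) ^ 2) * ξ i
      + (1 - dot3 b b) * (dot3 w ξ * w i)
      + dot3 b ξ * (dot3 b w * (Sfun b w i - dot3 b w * b i)
          - dot3 w w * b i + dot3 b w * w i) := by
  fin_cases i <;>
    simp only [Fin.zero_eta, Fin.mk_one, Fin.reduceFinMk, dot3, Sfun_a0, Sfun_a1, Sfun_a2] <;>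
    ring

/-! ### Conditional identities, given `dot3 b b = 1` -/

section withb
variable {b : E3}

lemma dotS (hb : dot3 b b = 1) (w : E3) : dot3 b (Sfun b w) = dot3 b w := by
  have h := U2 b w; rw [hb] at h; linarith

lemma normsqS (hb : dot3 b b = 1) (w : E3) : dot3 (Sfun b w) (Sfun b w) = dot3 w w := by
  have h := U3 b w; rw [hb] at h; linarith

lemma SS (hb : dot3 b b = 1) (w : E3) (i : Fin 3) : Sfun b (Sfun b w) i = 2 * dot3 b w * b i - w i := by
  have h := U4 b w i; rw [hb] at h; linarith

lemma S3 (hb : dot3 b b = 1) (w : E3) (i : Fin 3) :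
    Sfun b (Sfun b (Sfun b w)) i = 2 * dot3 b w * b i - Sfun b w i := by
  have h := U6 b w i; rw [hb] at h; linear_combination h

lemma dotSS (hb : dot3 b b = 1) (w ξ : E3) :
    dot3 (Sfun b (Sfun b w)) ξ = 2 * dot3 b w * dot3 b ξ - dot3 w ξ := by
  have h := U5 b w ξ; rw [hb] at h; linarith

lemma dotS3 (hb : dot3 b b = 1) (w ξ : E3) :
    dot3 (Sfun b (Sfun b (Sfun b w))) ξ = 2 * dot3 b w * dot3 b ξ - dot3 (Sfun b w) ξ := by
  have h := U7 b w ξ; rw [hb] at h; linear_combination h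

lemma CORE (hb : dot3 b b = 1) (w ξ : E3) (i : Fin 3) :
    w i * dot3 w ξ + Sfun b w i * dot3 (Sfun b w) ξ
    = dot3 b w * b i * (dot3 w ξ + dot3 (Sfun b w) ξ)
      + (dot3 w w - (dot3 b w) ^ 2) * ξ i
      + dot3 b ξ * (dot3 b w * (Sfun b w i - dot3 b w * b i)
          - dot3 w w * b i + dot3 b w * w i) := by
  have h := UCORE b w ξ i; rw [hb] at h; linear_combination h

lemma TGEN (hb : dot3 b b = 1) (w ξ : E3) (i : Fin 3) :
    w i * dot3 w ξ + Sfun b w i * dot3 (Sfun b w) ξ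
      + Sfun b (Sfun b w) i * dot3 (Sfun b (Sfun b w)) ξ
      + Sfun b (Sfun b (Sfun b w)) i * dot3 (Sfun b (Sfun b (Sfun b w))) ξ
    = 2 * (dot3 w w - (dot3 b w) ^ 2) * ξ i
      + dot3 b ξ * (6 * (dot3 b w) ^ 2 - 2 * dot3 w w) * b i := by
  rw [SS hb, S3 hb, dotSS hb, dotS3 hb]
  linear_combination 2 * CORE hb w ξ i

/-! ### `Sfun b` as a linear isometry equivalence -/

lemma Sfun_add (b u w : E3) : Sfun b (u + w) = Sfun b u + Sfun b w := by
  ext i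
  fin_cases i <;>
    simp only [Fin.zero_eta, Fin.mk_one, Fin.reduceFinMk, PiLp.add_apply,
      dot3, Sfun_a0, Sfun_a1, Sfun_a2] <;> ring

lemma Sfun_smul (b : E3) (c : ℝ) (w : E3) : Sfun b (c • w) = c • Sfun b w := by
  ext i
  fin_cases i <;>
    simp only [Fin.zero_eta, Fin.mk_one, Fin.reduceFinMk, PiLp.smul_apply, smul_eq_mul,
      dot3, Sfun_a0, Sfun_a1, Sfun_a2] <;> ring

lemma Sfun_sub (b u w : E3) : Sfun b (u - w) = Sfun b u - Sfun b w := by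
  ext i
  fin_cases i <;>
    simp only [Fin.zero_eta, Fin.mk_one, Fin.reduceFinMk, PiLp.sub_apply,
      dot3, Sfun_a0, Sfun_a1, Sfun_a2] <;> ring

lemma normS (hb : dot3 b b = 1) (w : E3) : ‖Sfun b w‖ = ‖w‖ := by
  rw [EuclideanSpace.norm_eq, EuclideanSpace.norm_eq]
  congr 1
  have h := normsqS hb w
  simp only [Fin.sum_univ_three, Real.norm_eq_abs, sq_abs]
  simp only [dot3] at h
  linear_combination h

lemma S4 (hb : dot3 b b = 1) (w : E3) (i : Fin 3) : Sfun b (Sfun b (Sfun b (Sfun b w))) i = w i := by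
  have h1 := S3 hb (Sfun b w) i
  rw [h1, dotS hb, SS hb]
  ring

def Slm (b : E3) : E3 →ₗ[ℝ] E3 where
  toFun := Sfun b
  map_add' := Sfun_add b
  map_smul' := Sfun_smul b

def Siso (hb : dot3 b b = 1) : E3 ≃ₗᵢ[ℝ] E3 where
  toLinearEquiv := LinearEquiv.ofLinear (Slm b) ((Slm b) ∘ₗ (Slm b) ∘ₗ (Slm b))
    (by
      apply LinearMap.ext; intro w; ext i
      exact S4 hb w i)
    (by
      apply LinearMap.ext; intro w; ext i
      exact S4 hb w i)
  norm_map' := normS hb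

lemma Siso_coe (hb : dot3 b b = 1) : ⇑(Siso hb) = Sfun b := rfl

end withb

/-! ### Integrability machinery -/

lemma gauss_nonneg (v : E3) : 0 ≤ gauss v := by
  unfold gauss
  positivity

lemma continuous_gauss : Continuous gauss := by unfold gauss; fun_prop

lemma integrable_exp_quarter : Integrable (fun u : E3 => Real.exp (-‖u‖ ^ 2 / 4)) := by
  have h := GaussianFourier.integrable_cexp_neg_mul_sq_norm_add
    (V := E3) (b := (1 / 4 : ℂ)) (by norm_num) 0 0
  have h2 := h.norm
  apply h2.congr'
  · exact (Real.continuous_exp.comp (by fun_prop)).aestronglyMeasurable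
  · filter_upwards with u
    rw [Complex.norm_exp]
    congr 1
    simp [← Complex.ofReal_pow]
    ring

lemma cube_exp_bound (a t : ℝ) (ha : 1 ≤ a) (ht : 0 ≤ t) :
    (a + t) ^ 3 ≤ (a + 3) ^ 3 * Real.exp (t ^ 2 / 4) := by
  have h1 : a + t ≤ (a + 3) * (1 + t ^ 2 / 12) := by
    nlinarith [sq_nonneg (t - 3/2), mul_nonneg (sub_nonneg.2 ha) (sq_nonneg t)]
  have h2 : (a + t) ^ 3 ≤ ((a + 3) * (1 + t ^ 2 / 12)) ^ 3 :=
    pow_le_pow_left₀ (by positivity) h1 3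
  have h3 : (1 + t ^ 2 / 12) ^ 3 ≤ (Real.exp (t ^ 2 / 12)) ^ 3 := by
    apply pow_le_pow_left₀ (by positivity)
    have := Real.add_one_le_exp (t ^ 2 / 12)
    linarith
  have h4 : (Real.exp (t ^ 2 / 12)) ^ 3 = Real.exp (t ^ 2 / 4) := by
    rw [← Real.exp_nat_mul]
    congr 1
    ring
  calc (a + t) ^ 3 ≤ ((a + 3) * (1 + t ^ 2 / 12)) ^ 3 := h2
    _ = (a + 3) ^ 3 * (1 + t ^ 2 / 12) ^ 3 := by ring
    _ ≤ (a + 3) ^ 3 * Real.exp (t ^ 2 / 4) := by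
        rw [← h4]
        exact mul_le_mul_of_nonneg_left h3 (by positivity)

lemma integrable_base (v : E3) :
    Integrable (fun w : E3 => (1 + ‖w‖) ^ 3 * gauss (v - w)) := by
  set C : ℝ := (2 * π) ^ (-(3 : ℝ) / 2) * ((1 + ‖v‖) + 3) ^ 3 with hC
  have hG : Integrable (fun u : E3 => C * Real.exp (-‖u‖ ^ 2 / 4)) :=
    integrable_exp_quarter.const_mul C
  have hG' : Integrable (fun w : E3 => C * Real.exp (-‖v - w‖ ^ 2 / 4)) :=
    hG.comp_sub_left v
  apply hG'.mono'
  · exact (((continuous_const.add continuous_norm).pow 3).mul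
      (continuous_gauss.comp (continuous_const.sub continuous_id))).aestronglyMeasurable
  · filter_upwards with w
    have hg0 : 0 ≤ gauss (v - w) := gauss_nonneg _
    rw [Real.norm_eq_abs, abs_of_nonneg (by positivity)]
    have h1 : (1 + ‖w‖) ^ 3 ≤ ((1 + ‖v‖) + 3) ^ 3 * Real.exp (‖v - w‖ ^ 2 / 4) := by
      have htri : ‖w‖ ≤ ‖v‖ + ‖v - w‖ := by
        calc ‖w‖ = ‖v - (v - w)‖ := by rw [sub_sub_cancel]
          _ ≤ ‖v‖ + ‖v - w‖ := norm_sub_le _ _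
      calc (1 + ‖w‖) ^ 3 ≤ ((1 + ‖v‖) + ‖v - w‖) ^ 3 := by
            apply pow_le_pow_left₀ (by positivity)
            linarith
        _ ≤ ((1 + ‖v‖) + 3) ^ 3 * Real.exp (‖v - w‖ ^ 2 / 4) :=
            cube_exp_bound (1 + ‖v‖) ‖v - w‖ (by linarith [norm_nonneg v]) (norm_nonneg _)
    calc (1 + ‖w‖) ^ 3 * gauss (v - w)
        ≤ (((1 + ‖v‖) + 3) ^ 3 * Real.exp (‖v - w‖ ^ 2 / 4)) * gauss (v - w) :=
          mul_le_mul_of_nonneg_right h1 hg0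
      _ = C * Real.exp (-‖v - w‖ ^ 2 / 4) := by
          have hee : Real.exp (‖v - w‖ ^ 2 / 4) * Real.exp (-‖v - w‖ ^ 2 / 2)
              = Real.exp (-‖v - w‖ ^ 2 / 4) := by
            rw [← Real.exp_add]; congr 1; ring
          unfold gauss
          rw [hC]
          linear_combination (((1 + ‖v‖) + 3) ^ 3 * (2 * π) ^ (-(3:ℝ)/2)) * hee

lemma integrable_dom (v : E3) {f : E3 → ℝ} (hm : AEStronglyMeasurable f volume) (C : ℝ)
    (hC : ∀ w, |f w| ≤ C * ((1 + ‖w‖) ^ 3 * gauss (v - w))) : Integrable f := by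
  apply (((integrable_base v).const_mul C)).mono' hm
  filter_upwards with w
  rw [Real.norm_eq_abs, ← mul_assoc]
  have := hC w
  linarith [this, mul_assoc C ((1 + ‖w‖) ^ 3) (gauss (v - w))]

lemma rpow_le_cube (γ : ℝ) (hγ0 : 0 ≤ γ) (hγ1 : γ ≤ 1) (t : ℝ) (ht : 0 ≤ t) :
    t ^ (γ + 2) ≤ (1 + t) ^ 3 := by
  have h1 : t ^ (γ + 2) ≤ (1 + t) ^ (γ + 2) :=
    Real.rpow_le_rpow ht (by linarith) (by linarith)
  have h2 : (1 + t) ^ (γ + 2) ≤ (1 + t) ^ ((3 : ℕ) : ℝ) :=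
    Real.rpow_le_rpow_of_exponent_le (by linarith) (by push_cast; linarith)
  rw [Real.rpow_natCast] at h2
  linarith

end

end Stmt4Aux

namespace Stmt4Aux

noncomputable section

open MeasureTheory Real

lemma ae_nonzero : ∀ᵐ w : E3 ∂volume, w ≠ 0 := by
  rw [ae_iff]
  simp only [not_not, Set.setOf_eq_eq_singleton]
  exact measure_singleton 0

lemma qbound (w ξ : E3) (i : Fin 3) :
    |w i * dot3 w ξ / ‖w‖ ^ 2| ≤ |ξ 0| + |ξ 1| + |ξ 2| := by
  rcases eq_or_ne (‖w‖) 0 with h | h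
  · rw [h]
    norm_num
    positivity
  · have hpos : (0:ℝ) < ‖w‖ ^ 2 := by positivity
    rw [abs_div, abs_of_nonneg (le_of_lt hpos), div_le_iff₀ hpos, abs_mul]
    have h1 : |w i| ≤ ‖w‖ := coord_abs_le w i
    have h2 : |dot3 w ξ| ≤ ‖w‖ * (|ξ 0| + |ξ 1| + |ξ 2|) := by
      unfold dot3
      have := abs_add_three (w 0 * ξ 0) (w 1 * ξ 1) (w 2 * ξ 2)
      have e0 : |w 0 * ξ 0| ≤ ‖w‖ * |ξ 0| := by
        rw [abs_mul]; exact mul_le_mul_of_nonneg_right (coord_abs_le w 0) (abs_nonneg _)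
      have e1 : |w 1 * ξ 1| ≤ ‖w‖ * |ξ 1| := by
        rw [abs_mul]; exact mul_le_mul_of_nonneg_right (coord_abs_le w 1) (abs_nonneg _)
      have e2 : |w 2 * ξ 2| ≤ ‖w‖ * |ξ 2| := by
        rw [abs_mul]; exact mul_le_mul_of_nonneg_right (coord_abs_le w 2) (abs_nonneg _)
      calc |w 0 * ξ 0 + w 1 * ξ 1 + w 2 * ξ 2| ≤ |w 0 * ξ 0| + |w 1 * ξ 1| + |w 2 * ξ 2| := this
        _ ≤ ‖w‖ * |ξ 0| + ‖w‖ * |ξ 1| + ‖w‖ * |ξ 2| := by linarith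
        _ = ‖w‖ * (|ξ 0| + |ξ 1| + |ξ 2|) := by ring
    calc |w i| * |dot3 w ξ| ≤ ‖w‖ * (‖w‖ * (|ξ 0| + |ξ 1| + |ξ 2|)) := by
          apply mul_le_mul h1 h2 (abs_nonneg _) (norm_nonneg _)
      _ = (|ξ 0| + |ξ 1| + |ξ 2|) * ‖w‖ ^ 2 := by ring

lemma dbound {b : E3} (hb : dot3 b b = 1) (w : E3) :
    (dot3 b w) ^ 2 / ‖w‖ ^ 2 ≤ 1 := by
  rcases eq_or_ne (‖w‖) 0 with h | h
  · rw [h]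
    norm_num
  · have hpos : (0:ℝ) < ‖w‖ ^ 2 := by positivity
    rw [div_le_one hpos, norm_sq3]
    have := cauchy3 b w
    rw [hb] at this
    linarith

lemma integrable_amat (γ : ℝ) (hγ0 : 0 ≤ γ) (hγ1 : γ ≤ 1) (v : E3) (i j : Fin 3) :
    Integrable (fun w : E3 => amat γ w i j * gauss (v - w)) := by
  apply integrable_dom v ?_ 2
  · intro w
    rw [abs_mul, abs_of_nonneg (gauss_nonneg _)]
    have h1 : |amat γ w i j| ≤ 2 * (1 + ‖w‖) ^ 3 := by
      unfold amat
      rw [abs_mul, abs_of_nonneg (Real.rpow_nonneg (norm_nonneg w) _)]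
      have hq : |w i * w j / ‖w‖ ^ 2| ≤ 1 := by
        rcases eq_or_ne (‖w‖) 0 with h | h
        · rw [h]; norm_num
        · have hpos : (0:ℝ) < ‖w‖ ^ 2 := by positivity
          rw [abs_div, abs_of_nonneg (le_of_lt hpos), div_le_one hpos, abs_mul]
          nlinarith [coord_abs_le w i, coord_abs_le w j, abs_nonneg (w i), abs_nonneg (w j),
            norm_nonneg w]
      have hite : |(if i = j then (1:ℝ) else 0)| ≤ 1 := by split_ifs <;> norm_num
      have h2 : |(if i = j then (1:ℝ) else 0) - w i * w j / ‖w‖ ^ 2| ≤ 2 := by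
        calc |(if i = j then (1:ℝ) else 0) - w i * w j / ‖w‖ ^ 2|
            ≤ |(if i = j then (1:ℝ) else 0)| + |w i * w j / ‖w‖ ^ 2| := abs_sub _ _
          _ ≤ 2 := by linarith
      have h3 : ‖w‖ ^ (γ + 2) ≤ (1 + ‖w‖) ^ 3 :=
        rpow_le_cube γ hγ0 hγ1 ‖w‖ (norm_nonneg w)
      calc ‖w‖ ^ (γ + 2) * |(if i = j then (1:ℝ) else 0) - w i * w j / ‖w‖ ^ 2|
          ≤ ‖w‖ ^ (γ + 2) * 2 :=
            mul_le_mul_of_nonneg_left h2 (Real.rpow_nonneg (norm_nonneg w) _)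
        _ ≤ (1 + ‖w‖) ^ 3 * 2 := mul_le_mul_of_nonneg_right h3 (by norm_num)
        _ = 2 * (1 + ‖w‖) ^ 3 := by ring
    calc |amat γ w i j| * gauss (v - w) ≤ (2 * (1 + ‖w‖) ^ 3) * gauss (v - w) :=
          mul_le_mul_of_nonneg_right h1 (gauss_nonneg _)
      _ = 2 * ((1 + ‖w‖) ^ 3 * gauss (v - w)) := by ring
  · apply Measurable.aestronglyMeasurable
    unfold amat gauss
    fun_prop

lemma integrable_K (γ : ℝ) (hγ0 : 0 ≤ γ) (hγ1 : γ ≤ 1) (v ξ : E3) (i : Fin 3) :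
    Integrable (fun w : E3 =>
      ‖w‖ ^ (γ + 2) * (ξ i - w i * dot3 w ξ / ‖w‖ ^ 2) * gauss (v - w)) := by
  apply integrable_dom v ?_ (|ξ i| + (|ξ 0| + |ξ 1| + |ξ 2|))
  · intro w
    rw [abs_mul, abs_mul, abs_of_nonneg (gauss_nonneg _),
      abs_of_nonneg (Real.rpow_nonneg (norm_nonneg w) _)]
    have h2 : |ξ i - w i * dot3 w ξ / ‖w‖ ^ 2| ≤ |ξ i| + (|ξ 0| + |ξ 1| + |ξ 2|) := by
      calc |ξ i - w i * dot3 w ξ / ‖w‖ ^ 2| ≤ |ξ i| + |w i * dot3 w ξ / ‖w‖ ^ 2| := abs_sub _ _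
        _ ≤ _ := by linarith [qbound w ξ i]
    have h3 : ‖w‖ ^ (γ + 2) ≤ (1 + ‖w‖) ^ 3 := rpow_le_cube γ hγ0 hγ1 ‖w‖ (norm_nonneg w)
    calc ‖w‖ ^ (γ + 2) * |ξ i - w i * dot3 w ξ / ‖w‖ ^ 2| * gauss (v - w)
        ≤ (1 + ‖w‖) ^ 3 * (|ξ i| + (|ξ 0| + |ξ 1| + |ξ 2|)) * gauss (v - w) := by
          apply mul_le_mul_of_nonneg_right _ (gauss_nonneg _)
          apply mul_le_mul h3 h2 (abs_nonneg _) (by positivity)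
      _ = (|ξ i| + (|ξ 0| + |ξ 1| + |ξ 2|)) * ((1 + ‖w‖) ^ 3 * gauss (v - w)) := by ring
  · apply Measurable.aestronglyMeasurable
    unfold dot3 gauss
    fun_prop

lemma integrable_L (γ : ℝ) (hγ0 : 0 ≤ γ) (hγ1 : γ ≤ 1) (v : E3) {b : E3}
    (hb : dot3 b b = 1) (c₀ c₁ : ℝ) :
    Integrable (fun w : E3 =>
      (c₀ + c₁ * (dot3 b w) ^ 2 / ‖w‖ ^ 2) * (‖w‖ ^ (γ + 2) * gauss (v - w))) := by
  apply integrable_dom v ?_ (|c₀| + |c₁|)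
  · intro w
    rw [abs_mul]
    have hAG : |‖w‖ ^ (γ + 2) * gauss (v - w)| = ‖w‖ ^ (γ + 2) * gauss (v - w) := by
      rw [abs_of_nonneg]
      exact mul_nonneg (Real.rpow_nonneg (norm_nonneg w) _) (gauss_nonneg _)
    rw [hAG]
    have h1 : |c₀ + c₁ * (dot3 b w) ^ 2 / ‖w‖ ^ 2| ≤ |c₀| + |c₁| := by
      have hd := dbound hb w
      have hd0 : 0 ≤ (dot3 b w) ^ 2 / ‖w‖ ^ 2 := by positivity
      calc |c₀ + c₁ * (dot3 b w) ^ 2 / ‖w‖ ^ 2|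
          ≤ |c₀| + |c₁ * (dot3 b w) ^ 2 / ‖w‖ ^ 2| := abs_add_le _ _
        _ ≤ |c₀| + |c₁| := by
            have : |c₁ * (dot3 b w) ^ 2 / ‖w‖ ^ 2| = |c₁| * ((dot3 b w) ^ 2 / ‖w‖ ^ 2) := by
              rw [mul_div_assoc, abs_mul, abs_of_nonneg hd0]
            rw [this]
            nlinarith [abs_nonneg c₁]
    have hAG2 : ‖w‖ ^ (γ + 2) * gauss (v - w) ≤ (1 + ‖w‖) ^ 3 * gauss (v - w) :=
      mul_le_mul_of_nonneg_right (rpow_le_cube γ hγ0 hγ1 ‖w‖ (norm_nonneg w)) (gauss_nonneg _)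
    calc |c₀ + c₁ * (dot3 b w) ^ 2 / ‖w‖ ^ 2| * (‖w‖ ^ (γ + 2) * gauss (v - w))
        ≤ (|c₀| + |c₁|) * (‖w‖ ^ (γ + 2) * gauss (v - w)) := by
          apply mul_le_mul_of_nonneg_right h1
          exact mul_nonneg (Real.rpow_nonneg (norm_nonneg w) _) (gauss_nonneg _)
      _ ≤ (|c₀| + |c₁|) * ((1 + ‖w‖) ^ 3 * gauss (v - w)) := by
          apply mul_le_mul_of_nonneg_left hAG2 (by positivity)
  · apply Measurable.aestronglyMeasurable
    unfold dot3 gauss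
    fun_prop

lemma integral_orbit_zero {b : E3} (hb : dot3 b b = 1) {D : E3 → ℝ} (hD : Integrable D)
    (h : ∀ w : E3, w ≠ 0 → D w + D (Sfun b w) + D (Sfun b (Sfun b w))
      + D (Sfun b (Sfun b (Sfun b w))) = 0) :
    ∫ w : E3, D w = 0 := by
  set T := Siso hb with hT
  have I1 : Integrable (fun w : E3 => D (Sfun b w)) := by
    have := (MeasureTheory.integrable_comp T D).mpr hD
    simpa [Function.comp_def, hT, Siso_coe] using this
  have I2 : Integrable (fun w : E3 => D (Sfun b (Sfun b w))) := by
    have := (MeasureTheory.integrable_comp (T.trans T) D).mpr hD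
    simpa [Function.comp_def, LinearIsometryEquiv.trans_apply, hT, Siso_coe] using this
  have I3 : Integrable (fun w : E3 => D (Sfun b (Sfun b (Sfun b w)))) := by
    have := (MeasureTheory.integrable_comp ((T.trans T).trans T) D).mpr hD
    simpa [Function.comp_def, LinearIsometryEquiv.trans_apply, hT, Siso_coe] using this
  have EE1 : ∫ w : E3, D (Sfun b w) = ∫ w : E3, D w := by
    have := MeasureTheory.integral_comp T D
    simpa [hT, Siso_coe] using this
  have EE2 : ∫ w : E3, D (Sfun b (Sfun b w)) = ∫ w : E3, D w := by
    have := MeasureTheory.integral_comp (T.trans T) D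
    simpa [LinearIsometryEquiv.trans_apply, hT, Siso_coe] using this
  have EE3 : ∫ w : E3, D (Sfun b (Sfun b (Sfun b w))) = ∫ w : E3, D w := by
    have := MeasureTheory.integral_comp ((T.trans T).trans T) D
    simpa [LinearIsometryEquiv.trans_apply, hT, Siso_coe] using this
  have hae : (fun w : E3 => D w + D (Sfun b w) + D (Sfun b (Sfun b w))
      + D (Sfun b (Sfun b (Sfun b w)))) =ᵐ[volume] 0 := by
    filter_upwards [ae_nonzero] with w hw
    exact h w hw
  have hsum : ∫ w : E3, (D w + D (Sfun b w) + D (Sfun b (Sfun b w))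
      + D (Sfun b (Sfun b (Sfun b w)))) = 0 := by
    rw [integral_congr_ae hae]
    simp
  have J1 : Integrable (fun w : E3 => D w + D (Sfun b w)) := hD.add I1
  have J2 : Integrable (fun w : E3 => D w + D (Sfun b w) + D (Sfun b (Sfun b w))) := J1.add I2
  have ha : ∫ w : E3, (D w + D (Sfun b w) + D (Sfun b (Sfun b w))
        + D (Sfun b (Sfun b (Sfun b w))))
      = (∫ w : E3, (D w + D (Sfun b w) + D (Sfun b (Sfun b w))))
        + ∫ w : E3, D (Sfun b (Sfun b (Sfun b w))) := integral_add J2 I3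
  have hb2 : ∫ w : E3, (D w + D (Sfun b w) + D (Sfun b (Sfun b w)))
      = (∫ w : E3, (D w + D (Sfun b w))) + ∫ w : E3, D (Sfun b (Sfun b w)) := integral_add J1 I2
  have hc2 : ∫ w : E3, (D w + D (Sfun b w))
      = (∫ w : E3, D w) + ∫ w : E3, D (Sfun b w) := integral_add hD I1
  linarith [hsum, ha, hb2, hc2, EE1, EE2, EE3]

lemma stepB (γ : ℝ) (hγ0 : 0 ≤ γ) (hγ1 : γ ≤ 1) (v : E3) {b : E3} (hb : dot3 b b = 1)
    (hSv : Sfun b v = v) (ξ : E3) (c₀ c₁ : ℝ)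
    (horb : ∀ w : E3, ∀ i : Fin 3,
      dot3 b ξ * (6 * (dot3 b w) ^ 2 - 2 * dot3 w w) * b i
        + 2 * (dot3 w w - (dot3 b w) ^ 2) * ξ i
      = 4 * (1 - c₀) * dot3 w w * ξ i - 4 * c₁ * (dot3 b w) ^ 2 * ξ i)
    (i : Fin 3) :
    ∫ w : E3, ‖w‖ ^ (γ + 2) * (ξ i - w i * dot3 w ξ / ‖w‖ ^ 2) * gauss (v - w)
    = (∫ w : E3, (c₀ + c₁ * (dot3 b w) ^ 2 / ‖w‖ ^ 2) * (‖w‖ ^ (γ + 2) * gauss (v - w)))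
        * ξ i := by
  have IK := integrable_K γ hγ0 hγ1 v ξ i
  have IL := integrable_L γ hγ0 hγ1 v hb c₀ c₁
  have hD : Integrable (fun w : E3 =>
      ‖w‖ ^ (γ + 2) * (ξ i - w i * dot3 w ξ / ‖w‖ ^ 2) * gauss (v - w)
      - (c₀ + c₁ * (dot3 b w) ^ 2 / ‖w‖ ^ 2) * (‖w‖ ^ (γ + 2) * gauss (v - w)) * ξ i) :=
    IK.sub (IL.mul_const _)
  have hzero : ∫ w : E3,
      (‖w‖ ^ (γ + 2) * (ξ i - w i * dot3 w ξ / ‖w‖ ^ 2) * gauss (v - w)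
      - (c₀ + c₁ * (dot3 b w) ^ 2 / ‖w‖ ^ 2) * (‖w‖ ^ (γ + 2) * gauss (v - w)) * ξ i) = 0 := by
    apply integral_orbit_zero hb hD
    intro w hw
    have hm : ‖w‖ ≠ 0 := norm_ne_zero_iff.mpr hw
    have hgs : ∀ z : E3, gauss (v - Sfun b z) = gauss (v - z) := by
      intro z
      have h1 : v - Sfun b z = Sfun b (v - z) := by rw [Sfun_sub, hSv]
      rw [h1]
      unfold gauss
      rw [normS hb]
    have hns : ∀ z : E3, ‖Sfun b z‖ = ‖z‖ := normS hb
    have hds : ∀ z : E3, dot3 b (Sfun b z) = dot3 b z := dotS hb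
    simp only [hgs, hns, hds]
    rw [norm_sq3 w]
    have hM : dot3 w w ≠ 0 := by rw [← norm_sq3]; exact pow_ne_zero 2 hm
    have hz : dot3 w w * (dot3 w w)⁻¹ = 1 := mul_inv_cancel₀ hM
    have tg := TGEN hb w ξ i
    have ho := horb w i
    simp only [div_eq_mul_inv]
    linear_combination
      (-(‖w‖ ^ (γ + 2) * gauss (v - w) * (dot3 w w)⁻¹)) * tg
      + (-(‖w‖ ^ (γ + 2) * gauss (v - w) * (dot3 w w)⁻¹)) * ho
      - (4 * (1 - c₀) * ξ i * ‖w‖ ^ (γ + 2) * gauss (v - w)) * hz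
  have hsub := integral_sub IK (IL.mul_const (ξ i))
  have h2 : ∫ w : E3, (c₀ + c₁ * (dot3 b w) ^ 2 / ‖w‖ ^ 2)
      * (‖w‖ ^ (γ + 2) * gauss (v - w)) * ξ i
      = (∫ w : E3, (c₀ + c₁ * (dot3 b w) ^ 2 / ‖w‖ ^ 2)
          * (‖w‖ ^ (γ + 2) * gauss (v - w))) * ξ i :=
    integral_mul_const (ξ i) _
  rw [hzero] at hsub
  rw [← h2]
  linarith

lemma stepA (γ : ℝ) (hγ0 : 0 ≤ γ) (hγ1 : γ ≤ 1) (v : E3) (ξ : E3) (i : Fin 3) :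
    (∑ j, abar γ v i j * ξ j)
    = ∫ w : E3, ‖w‖ ^ (γ + 2) * (ξ i - w i * dot3 w ξ / ‖w‖ ^ 2) * gauss (v - w) := by
  have hab : ∀ j, abar γ v i j = ∫ w : E3, amat γ w i j * gauss (v - w) := by
    intro j
    unfold abar
    rw [← integral_sub_left_eq_self (fun u : E3 => amat γ u i j * gauss (v - u)) volume v]
    simp only [sub_sub_cancel]
  have hInt : ∀ j, Integrable (fun w : E3 => amat γ w i j * gauss (v - w) * ξ j) :=
    fun j => (integrable_amat γ hγ0 hγ1 v i j).mul_const (ξ j)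
  calc (∑ j, abar γ v i j * ξ j)
      = ∑ j, ∫ w : E3, amat γ w i j * gauss (v - w) * ξ j := by
        refine Finset.sum_congr rfl fun j _ => ?_
        rw [hab j, ← integral_mul_const]
    _ = ∫ w : E3, ∑ j, amat γ w i j * gauss (v - w) * ξ j :=
        (integral_finset_sum _ (fun j _ => hInt j)).symm
    _ = ∫ w : E3, ‖w‖ ^ (γ + 2) * (ξ i - w i * dot3 w ξ / ‖w‖ ^ 2) * gauss (v - w) := by
        refine integral_congr_ae (Filter.Eventually.of_forall fun w => ?_)
        simp only [Fin.sum_univ_three, amat, dot3]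
        fin_cases i <;>
          simp only [Fin.zero_eta, Fin.mk_one, Fin.reduceFinMk, Fin.reduceEq,
            if_true, if_false, ite_true, ite_false, reduceIte] <;>
          ring

end

end Stmt4Aux

open Stmt4Aux in
set_option maxHeartbeats 2000000 in
/-- `ā(v) v = ℓ₁(v) v`, `ā(v) ξ = ℓ₂(v) ξ` for `ξ ⊥ v`, and the quadratic form identity
`ā_{ij}(v) ξ_i ξ_j = ℓ₁(v) |P_v ξ|² + ℓ₂(v) |(I - P_v) ξ|²`. -/
theorem stmt4 (γ : ℝ) (hγ0 : 0 ≤ γ) (hγ1 : γ ≤ 1) (v : E3) (hv : v ≠ 0) :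
    (∀ i, ∑ j, abar γ v i j * v j = ell1 γ v * v i) ∧
    (∀ ξ : E3, (∑ i, ξ i * v i) = 0 → ∀ i, ∑ j, abar γ v i j * ξ j = ell2 γ v * ξ i) ∧
    (∀ ξ : E3, ∑ i, ∑ j, abar γ v i j * ξ i * ξ j =
      ell1 γ v * (∑ i, (((∑ j, ξ j * v j) / ‖v‖) * (v i / ‖v‖)) ^ 2) +
      ell2 γ v * (∑ i, (ξ i - ((∑ j, ξ j * v j) / ‖v‖) * (v i / ‖v‖)) ^ 2)) := by
  have hn : (0:ℝ) < ‖v‖ := norm_pos_iff.mpr hv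
  have hn' : ‖v‖ ≠ 0 := ne_of_gt hn
  set b : E3 := (WithLp.equiv 2 (Fin 3 → ℝ)).symm (fun i => v i / ‖v‖) with hbdef
  have hbv : ∀ i : Fin 3, b i = v i / ‖v‖ := fun i => rfl
  have hvd : v 0 * v 0 + v 1 * v 1 + v 2 * v 2 = ‖v‖ ^ 2 := by
    have := norm_sq3 v
    simp only [dot3] at this
    linarith
  have hb : dot3 b b = 1 := by
    simp only [dot3, hbv]
    field_simp
    linarith
  have hSv : Sfun b v = v := by
    ext i
    fin_cases i
    · simp only [Fin.zero_eta, Sfun_a0, dot3, hbv]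
      field_simp
      linear_combination v 0 * hvd
    · simp only [Fin.mk_one, Sfun_a1, dot3, hbv]
      field_simp
      linear_combination v 1 * hvd
    · simp only [Fin.reduceFinMk, Sfun_a2, dot3, hbv]
      field_simp
      linear_combination v 2 * hvd
  -- identification of ℓ₁
  have hell1 : ell1 γ v = ∫ w : E3,
      (1 + (-1) * (dot3 b w) ^ 2 / ‖w‖ ^ 2) * (‖w‖ ^ (γ + 2) * gauss (v - w)) := by
    unfold ell1
    refine integral_congr_ae ?_
    filter_upwards [ae_nonzero] with w hw
    have hm : ‖w‖ ≠ 0 := norm_ne_zero_iff.mpr hw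
    have hs : (∑ i, v i / ‖v‖ * (w i / ‖w‖)) = dot3 b w / ‖w‖ := by
      simp only [Fin.sum_univ_three, dot3, hbv]
      ring
    rw [hs, div_pow]
    field_simp
    ring
  -- identification of ℓ₂
  have hell2 : ell2 γ v = ∫ w : E3,
      (1/2 + (1/2) * (dot3 b w) ^ 2 / ‖w‖ ^ 2) * (‖w‖ ^ (γ + 2) * gauss (v - w)) := by
    unfold ell2
    refine integral_congr_ae ?_
    filter_upwards [ae_nonzero] with w hw
    have hm : ‖w‖ ≠ 0 := norm_ne_zero_iff.mpr hw
    have hcs : crossSq (fun i => v i / ‖v‖) (fun i => w i / ‖w‖)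
        = ((v 0 * v 0 + v 1 * v 1 + v 2 * v 2) * (w 0 * w 0 + w 1 * w 1 + w 2 * w 2)
            - (v 0 * w 0 + v 1 * w 1 + v 2 * w 2) ^ 2) / (‖v‖ ^ 2 * ‖w‖ ^ 2) := by
      simp only [crossSq]
      field_simp
      ring
    have hww : w 0 * w 0 + w 1 * w 1 + w 2 * w 2 = ‖w‖ ^ 2 := by
      have := norm_sq3 w
      simp only [dot3] at this
      linarith
    have hd : dot3 b w = (v 0 * w 0 + v 1 * w 1 + v 2 * w 2) / ‖v‖ := by
      simp only [dot3, hbv]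
      ring
    rw [hcs, hvd, hww, hd]
    field_simp
    ring
  -- part 1
  have horb1 : ∀ w : E3, ∀ i : Fin 3,
      dot3 b v * (6 * (dot3 b w) ^ 2 - 2 * dot3 w w) * b i
        + 2 * (dot3 w w - (dot3 b w) ^ 2) * v i
      = 4 * (1 - 1) * dot3 w w * v i - 4 * (-1) * (dot3 b w) ^ 2 * v i := by
    intro w i
    have h1 : dot3 b v = ‖v‖ := by
      simp only [dot3, hbv]
      field_simp
      linarith
    have h2 : v i = ‖v‖ * b i := by
      rw [hbv]
      field_simp
    rw [h1, h2]
    ring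
  have part1 : ∀ i, ∑ j, abar γ v i j * v j = ell1 γ v * v i := by
    intro i
    rw [stepA γ hγ0 hγ1 v v i, stepB γ hγ0 hγ1 v hb hSv v 1 (-1) horb1 i, hell1]
  -- part 2
  have part2 : ∀ ξ : E3, (∑ i, ξ i * v i) = 0 →
      ∀ i, ∑ j, abar γ v i j * ξ j = ell2 γ v * ξ i := by
    intro ξ hξ i
    have hξ' : ξ 0 * v 0 + ξ 1 * v 1 + ξ 2 * v 2 = 0 := by
      simpa [Fin.sum_univ_three] using hξ
    have hbξ : dot3 b ξ = 0 := by
      simp only [dot3, hbv]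
      field_simp
      linarith
    have horb2 : ∀ w : E3, ∀ i : Fin 3,
        dot3 b ξ * (6 * (dot3 b w) ^ 2 - 2 * dot3 w w) * b i
          + 2 * (dot3 w w - (dot3 b w) ^ 2) * ξ i
        = 4 * (1 - 1/2) * dot3 w w * ξ i - 4 * (1/2) * (dot3 b w) ^ 2 * ξ i := by
      intro w i
      rw [hbξ]
      ring
    rw [stepA γ hγ0 hγ1 v ξ i, stepB γ hγ0 hγ1 v hb hSv ξ (1/2) (1/2) horb2 i, hell2]
  refine ⟨part1, part2, ?_⟩
  -- part 3
  intro ξ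
  obtain ⟨c, hc⟩ : ∃ c : ℝ, c = (∑ j, ξ j * v j) / ‖v‖ := ⟨_, rfl⟩
  obtain ⟨Q, hQ⟩ : ∃ Q : E3, ∀ i, Q i = ξ i - c * (v i / ‖v‖) :=
    ⟨(WithLp.equiv 2 (Fin 3 → ℝ)).symm (fun i => ξ i - c * (v i / ‖v‖)), fun i => rfl⟩
  rw [show ((∑ j, ξ j * v j) / ‖v‖) = c from hc.symm]
  have hsv' : ξ 0 * v 0 + ξ 1 * v 1 + ξ 2 * v 2 = c * ‖v‖ := by
    rw [hc]
    simp only [Fin.sum_univ_three]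
    field_simp
  have hQv : (∑ i, Q i * v i) = 0 := by
    simp only [Fin.sum_univ_three, hQ]
    field_simp
    linear_combination ‖v‖ * hsv' - c * hvd
  have hQi := part2 Q hQv
  have hdecomp : ∀ i, (∑ j, abar γ v i j * ξ j)
      = ell1 γ v * (c * (v i / ‖v‖)) + ell2 γ v * Q i := by
    intro i
    have e1 : (∑ j, abar γ v i j * ξ j)
        = (c / ‖v‖) * (∑ j, abar γ v i j * v j) + (∑ j, abar γ v i j * Q j) := by
      simp only [Fin.sum_univ_three, hQ]
      field_simp
      ring
    rw [e1, part1 i, hQi i]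
    ring
  have hP : ∑ i, ξ i * (c * (v i / ‖v‖)) = ∑ i, (c * (v i / ‖v‖)) ^ 2 := by
    simp only [Fin.sum_univ_three]
    field_simp
    linear_combination c * ‖v‖ * hsv' - c ^ 2 * hvd
  have hQ2 : ∑ i, ξ i * Q i = ∑ i, (Q i) ^ 2 := by
    have h0 : ∑ i, Q i * v i = 0 := hQv
    simp only [Fin.sum_univ_three, hQ] at h0 ⊢
    field_simp at h0 ⊢
    linear_combination c * h0
  calc ∑ i, ∑ j, abar γ v i j * ξ i * ξ j
      = ∑ i, ξ i * (∑ j, abar γ v i j * ξ j) := by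
        refine Finset.sum_congr rfl fun i _ => ?_
        rw [Finset.mul_sum]
        refine Finset.sum_congr rfl fun j _ => ?_
        ring
    _ = ∑ i, ξ i * (ell1 γ v * (c * (v i / ‖v‖)) + ell2 γ v * Q i) := by
        refine Finset.sum_congr rfl fun i _ => ?_
        rw [hdecomp i]
    _ = ell1 γ v * (∑ i, (c * (v i / ‖v‖)) ^ 2) + ell2 γ v * (∑ i, (Q i) ^ 2) := by
        simp only [Fin.sum_univ_three] at hP hQ2 ⊢
        linear_combination ell1 γ v * hP + ell2 γ v * hQ2
    _ = ell1 γ v * (∑ i, (c * (v i / ‖v‖)) ^ 2) + ell2 γ v * (∑ i, (ξ i - c * (v i / ‖v‖)) ^ 2) := by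
        congr 1
        refine congrArg _ (Finset.sum_congr rfl fun i _ => ?_)
        rw [hQ i]
end
end

section
/- Let γ ∈ [0,1] and let β ∈ ℕ³ be a multi-index with |β| ≤ 2. There exists a constant C > 0 such that for every Schwartz function g on ℝ³, every v ∈ ℝ³ and all i,j ∈ {1,2,3}: |∂^β(a_{ij} * g)(v)| ≤ C ⟨v⟩^{γ+2} ∫_{ℝ³} |∂^β g(w)| ⟨w⟩^{γ+2} dw, where ⟨v⟩ := (1+|v|²)^{1/2}. -/
open MeasureTheory Real Filter

noncomputable section

/-- The partial derivative `∂_i f` in the `i`-th coordinate direction. -/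
def pd (i : Fin 3) (f : E3 → ℝ) : E3 → ℝ :=
  fun v => fderiv ℝ f v (EuclideanSpace.single i 1)

/-- The multi-index derivative `∂^β f` for `β ∈ ℕ³`. -/
def multiDeriv (β : Fin 3 → ℕ) (f : E3 → ℝ) : E3 → ℝ :=
  (pd 0)^[β 0] ((pd 1)^[β 1] ((pd 2)^[β 2] f))

/-- The weight `⟨v⟩ = (1 + |v|²)^{1/2}`. -/
def jap (v : E3) : ℝ := Real.sqrt (1 + ‖v‖ ^ 2)

namespace Stmt11Aux

lemma coord_abs_le_norm (z : E3) (i : Fin 3) : |z i| ≤ ‖z‖ := by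
  rw [EuclideanSpace.norm_eq, ← Real.sqrt_sq_eq_abs]
  apply Real.sqrt_le_sqrt
  have := Finset.single_le_sum (f := fun k => ‖z k‖ ^ 2) (fun k _ => by positivity)
    (Finset.mem_univ i)
  simpa [Real.norm_eq_abs, sq_abs] using this

lemma amat_eq (γ : ℝ) (hγ0 : 0 ≤ γ) (z : E3) (i j : Fin 3) :
    amat γ z i j = ‖z‖ ^ (γ + 2) * (if i = j then (1:ℝ) else 0) - ‖z‖ ^ γ * (z i * z j) := by
  rcases eq_or_ne z 0 with rfl | hz
  · have h0 : ((0:E3)) i = 0 := rfl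
    have h0' : ((0:E3)) j = 0 := rfl
    simp [amat, h0, h0', Real.zero_rpow (by positivity : γ + 2 ≠ 0)]
  · have hn : (0:ℝ) < ‖z‖ := norm_pos_iff.mpr hz
    have h2 : ‖z‖ ^ (γ + 2) = ‖z‖ ^ γ * ‖z‖ ^ (2:ℕ) := by
      rw [Real.rpow_add hn, ← Real.rpow_natCast ‖z‖ 2]; norm_num
    unfold amat
    rw [mul_sub]
    congr 1
    rw [h2]
    field_simp

lemma abs_amat_le (γ : ℝ) (hγ0 : 0 ≤ γ) (z : E3) (i j : Fin 3) :
    |amat γ z i j| ≤ 2 * ‖z‖ ^ (γ + 2) := by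
  rw [amat_eq γ hγ0]
  have hr : (0:ℝ) ≤ ‖z‖ ^ (γ + 2) := Real.rpow_nonneg (norm_nonneg _) _
  have h1 : |‖z‖ ^ (γ+2) * (if i = j then (1:ℝ) else 0)| ≤ ‖z‖ ^ (γ+2) := by
    rw [abs_mul, abs_of_nonneg hr]
    rcases eq_or_ne i j with h | h <;> simp [h, hr]
  have h2 : |‖z‖ ^ γ * (z i * z j)| ≤ ‖z‖ ^ (γ+2) := by
    rcases eq_or_ne z 0 with rfl | hz
    · have h0 : ((0:E3)) i = 0 := rfl
      simp only [h0, zero_mul, mul_zero, abs_zero]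
      exact Real.rpow_nonneg (norm_nonneg _) _
    · have hn : (0:ℝ) < ‖z‖ := norm_pos_iff.mpr hz
      have hrγ : (0:ℝ) ≤ ‖z‖ ^ γ := Real.rpow_nonneg (norm_nonneg _) _
      have hb : |z i * z j| ≤ ‖z‖ * ‖z‖ := by
        rw [abs_mul]
        exact mul_le_mul (coord_abs_le_norm z i) (coord_abs_le_norm z j) (abs_nonneg _)
          (norm_nonneg _)
      have heq : ‖z‖ ^ γ * (‖z‖ * ‖z‖) = ‖z‖ ^ (γ+2) := by
        rw [Real.rpow_add hn, show (2:ℝ) = ((2:ℕ):ℝ) by norm_num, Real.rpow_natCast]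
        ring
      calc |‖z‖ ^ γ * (z i * z j)| = ‖z‖ ^ γ * |z i * z j| := by
            rw [abs_mul, abs_of_nonneg hrγ]
        _ ≤ ‖z‖ ^ γ * (‖z‖ * ‖z‖) := by
            exact mul_le_mul_of_nonneg_left hb hrγ
        _ = ‖z‖ ^ (γ+2) := heq
  calc |‖z‖ ^ (γ+2) * (if i = j then (1:ℝ) else 0) - ‖z‖ ^ γ * (z i * z j)|
      ≤ |‖z‖ ^ (γ+2) * (if i = j then (1:ℝ) else 0)| + |‖z‖ ^ γ * (z i * z j)| := abs_sub _ _
    _ ≤ 2 * ‖z‖ ^ (γ + 2) := by linarith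

lemma continuous_coord (i : Fin 3) : Continuous fun z : E3 => z i :=
  (EuclideanSpace.proj (𝕜 := ℝ) i).continuous

lemma amat_cont (γ : ℝ) (hγ0 : 0 ≤ γ) (i j : Fin 3) :
    Continuous fun z : E3 => amat γ z i j := by
  simp only [amat_eq γ hγ0]
  apply Continuous.sub
  · exact (continuous_norm.rpow_const fun z => Or.inr (by positivity)).mul continuous_const
  · exact (continuous_norm.rpow_const fun z => Or.inr hγ0).mul
      ((continuous_coord i).mul (continuous_coord j))

end Stmt11Aux

namespace Stmt11Aux

def bbn (n : ℕ) (x : E3) : ℝ := ((1 + ‖x‖) ^ n)⁻¹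

lemma bbn_pos (n : ℕ) (x : E3) : 0 < bbn n x := by
  unfold bbn; positivity

lemma bbn_cont (n : ℕ) : Continuous (bbn n) := by
  unfold bbn
  exact ((continuous_const.add continuous_norm).pow n).inv₀ fun x => (by positivity : (0:ℝ) < (1 + ‖x‖) ^ n).ne'

lemma bbn_integrable {n : ℕ} (hn : 3 < n) : Integrable (bbn n) (volume : Measure E3) := by
  have hfr : ((Module.finrank ℝ E3 : ℝ)) < (n : ℝ) := by
    rw [finrank_euclideanSpace_fin]; exact_mod_cast hn
  have h := integrable_one_add_norm (E := E3) (μ := volume) hfr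
  refine h.congr (Eventually.of_forall fun x => ?_)
  show (1 + ‖x‖) ^ (-(n:ℝ)) = bbn n x
  rw [Real.rpow_neg (by positivity), Real.rpow_natCast]
  rfl

lemma peetre (u w : E3) : 1 + ‖u‖ ≤ (1 + ‖u - w‖) * (1 + ‖w‖) := by
  have h : ‖u‖ ≤ ‖u - w‖ + ‖w‖ := by
    calc ‖u‖ = ‖u - w + w‖ := by rw [sub_add_cancel]
      _ ≤ ‖u - w‖ + ‖w‖ := norm_add_le _ _
  nlinarith [norm_nonneg (u - w), norm_nonneg w]

lemma rpow_le_cube (γ : ℝ) (hγ0 : 0 ≤ γ) (hγ1 : γ ≤ 1) {t : ℝ} (ht : 0 ≤ t) :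
    t ^ (γ + 2) ≤ (1 + t) ^ (3:ℕ) := by
  calc t ^ (γ + 2) ≤ (1 + t) ^ (γ + 2) :=
        Real.rpow_le_rpow ht (by linarith) (by linarith)
    _ ≤ (1 + t) ^ (3:ℝ) :=
        Real.rpow_le_rpow_of_exponent_le (by linarith) (by linarith)
    _ = (1 + t) ^ (3:ℕ) := by
        rw [← Real.rpow_natCast (1 + t) 3]; norm_num

lemma integrable_kernel (γ : ℝ) (hγ0 : 0 ≤ γ) (hγ1 : γ ≤ 1) (v : E3) :
    Integrable (fun z : E3 => ‖z‖ ^ (γ + 2) * bbn 8 (v - z)) := by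
  have hint : Integrable (fun z : E3 => (1 + ‖v‖) ^ (3:ℕ) * bbn 5 (v - z)) := by
    exact ((bbn_integrable (by norm_num)).comp_sub_left v).const_mul _
  refine hint.mono' ?_ (Eventually.of_forall fun z => ?_)
  · exact ((continuous_norm.rpow_const fun z => Or.inr (by positivity)).mul
      ((bbn_cont 8).comp (continuous_const.sub continuous_id))).aestronglyMeasurable
  · have hz3 : ‖z‖ ^ (γ + 2) ≤ (1 + ‖z‖) ^ (3:ℕ) := rpow_le_cube γ hγ0 hγ1 (norm_nonneg z)
    have hp : 1 + ‖z‖ ≤ (1 + ‖v‖) * (1 + ‖v - z‖) := by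
      have h := norm_sub_le v (v - z)
      rw [sub_sub_cancel] at h
      nlinarith [norm_nonneg v, norm_nonneg (v - z)]
    have h3 : (1 + ‖z‖) ^ (3:ℕ) ≤ (1 + ‖v‖) ^ (3:ℕ) * (1 + ‖v - z‖) ^ (3:ℕ) := by
      rw [← mul_pow]
      exact pow_le_pow_left₀ (by positivity) hp 3
    have hkey : (1 + ‖v - z‖) ^ (3:ℕ) * bbn 8 (v - z) = bbn 5 (v - z) := by
      unfold bbn
      have hpos : (0:ℝ) < 1 + ‖v - z‖ := by positivity
      field_simp
    rw [Real.norm_eq_abs, abs_of_nonneg (mul_nonneg (Real.rpow_nonneg (norm_nonneg z) _) (bbn_pos 8 _).le)]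
    calc ‖z‖ ^ (γ + 2) * bbn 8 (v - z)
        ≤ ((1 + ‖v‖) ^ (3:ℕ) * (1 + ‖v - z‖) ^ (3:ℕ)) * bbn 8 (v - z) := by
          refine mul_le_mul_of_nonneg_right (hz3.trans h3) (bbn_pos 8 _).le
      _ = (1 + ‖v‖) ^ (3:ℕ) * ((1 + ‖v - z‖) ^ (3:ℕ) * bbn 8 (v - z)) := by ring
      _ = (1 + ‖v‖) ^ (3:ℕ) * bbn 5 (v - z) := by rw [hkey]

lemma schwartz_decay (h : SchwartzMap E3 ℝ) :
    ∃ C : ℝ, 0 < C ∧ (∀ x, |h x| ≤ C * bbn 8 x) ∧ (∀ x, ‖fderiv ℝ (⇑h) x‖ ≤ C * bbn 8 x) := by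
  set S : ℝ := 2 ^ 8 * (Finset.Iic ((8,1) : ℕ × ℕ)).sup
    (fun m => SchwartzMap.seminorm ℝ m.1 m.2) h with hS
  have hS0 : 0 ≤ S := by
    apply mul_nonneg (by norm_num)
    exact apply_nonneg _ _
  have key : ∀ n : ℕ, n ≤ 1 → ∀ x : E3, ‖iteratedFDeriv ℝ n (⇑h) x‖ ≤ (S + 1) * bbn 8 x := by
    intro n hn x
    have hb := SchwartzMap.one_add_le_sup_seminorm_apply (𝕜 := ℝ) (m := ((8:ℕ),(1:ℕ)))
      le_rfl hn h x
    have hp : (0:ℝ) < (1 + ‖x‖) ^ (8:ℕ) := by positivity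
    have hb' : (1 + ‖x‖) ^ (8:ℕ) * ‖iteratedFDeriv ℝ n (⇑h) x‖ ≤ S := by
      simpa [hS] using hb
    have : ‖iteratedFDeriv ℝ n (⇑h) x‖ * (1 + ‖x‖) ^ (8:ℕ) ≤ S + 1 := by
      rw [mul_comm]; linarith
    rw [show (S + 1) * bbn 8 x = (S + 1) / (1 + ‖x‖) ^ (8:ℕ) by rw [bbn]; ring]
    rw [le_div_iff₀ hp]
    exact this
  refine ⟨S + 1, by linarith, fun x => ?_, fun x => ?_⟩
  · have := key 0 (by norm_num) x
    rwa [norm_iteratedFDeriv_zero, Real.norm_eq_abs] at this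
  · have h1 := key 1 le_rfl x
    have h2 : ‖iteratedFDeriv ℝ 0 (fderiv ℝ (⇑h)) x‖ = ‖iteratedFDeriv ℝ 1 (⇑h) x‖ :=
      norm_iteratedFDeriv_fderiv
    rw [norm_iteratedFDeriv_zero] at h2
    rw [h2]; exact h1

end Stmt11Aux

namespace Stmt11Aux

def conv (γ : ℝ) (i j : Fin 3) (h : SchwartzMap E3 ℝ) : E3 → ℝ :=
  fun v => ∫ w : E3, amat γ (v - w) i j * h w

lemma conv_eq (γ : ℝ) (i j : Fin 3) (h : SchwartzMap E3 ℝ) (v : E3) :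
    conv γ i j h v = ∫ z : E3, amat γ z i j * h (v - z) := by
  rw [conv]
  rw [← MeasureTheory.integral_sub_left_eq_self
    (fun w : E3 => amat γ (v - w) i j * h w) volume v]
  simp only [sub_sub_cancel]

lemma integrable_conv' (γ : ℝ) (hγ0 : 0 ≤ γ) (hγ1 : γ ≤ 1) (i j : Fin 3)
    (h : SchwartzMap E3 ℝ) (v : E3) :
    Integrable (fun z : E3 => amat γ z i j * h (v - z)) := by
  obtain ⟨C, hC, hCv, _⟩ := schwartz_decay h
  refine ((integrable_kernel γ hγ0 hγ1 v).const_mul (2 * C)).mono'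
    (((amat_cont γ hγ0 i j).mul
      (h.continuous.comp (continuous_const.sub continuous_id))).aestronglyMeasurable)
    (Eventually.of_forall fun z => ?_)
  rw [Real.norm_eq_abs, abs_mul]
  calc |amat γ z i j| * |h (v - z)|
      ≤ (2 * ‖z‖ ^ (γ + 2)) * (C * bbn 8 (v - z)) :=
        mul_le_mul (abs_amat_le γ hγ0 z i j) (hCv _) (abs_nonneg _)
          (by positivity)
    _ = 2 * C * (‖z‖ ^ (γ + 2) * bbn 8 (v - z)) := by ring

lemma integrable_conv (γ : ℝ) (hγ0 : 0 ≤ γ) (hγ1 : γ ≤ 1) (i j : Fin 3)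
    (h : SchwartzMap E3 ℝ) (v : E3) :
    Integrable (fun w : E3 => amat γ (v - w) i j * h w) := by
  have := (integrable_conv' γ hγ0 hγ1 i j h v).comp_sub_left v
  simpa [sub_sub_cancel] using this

set_option synthInstance.maxHeartbeats 400000 in
lemma integrable_conv_fderiv (γ : ℝ) (hγ0 : 0 ≤ γ) (hγ1 : γ ≤ 1) (i j : Fin 3)
    (h : SchwartzMap E3 ℝ) (v : E3) :
    Integrable (fun z : E3 => amat γ z i j • fderiv ℝ (⇑h) (v - z)) := by
  obtain ⟨C, hC, _, hCf⟩ := schwartz_decay h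
  have hcont : Continuous fun z : E3 => amat γ z i j • fderiv ℝ (⇑h) (v - z) :=
    (amat_cont γ hγ0 i j).smul
      (((h.smooth 1).continuous_fderiv (by simp)).comp (continuous_const.sub continuous_id))
  refine ((integrable_kernel γ hγ0 hγ1 v).const_mul (2 * C)).mono'
    hcont.aestronglyMeasurable (Eventually.of_forall fun z => ?_)
  rw [norm_smul, Real.norm_eq_abs]
  calc |amat γ z i j| * ‖fderiv ℝ (⇑h) (v - z)‖
      ≤ (2 * ‖z‖ ^ (γ + 2)) * (C * bbn 8 (v - z)) :=
        mul_le_mul (abs_amat_le γ hγ0 z i j) (hCf _) (norm_nonneg _) (by positivity)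
    _ = 2 * C * (‖z‖ ^ (γ + 2) * bbn 8 (v - z)) := by ring

set_option synthInstance.maxHeartbeats 400000 in
set_option maxHeartbeats 800000 in
lemma hasFDerivAt_conv (γ : ℝ) (hγ0 : 0 ≤ γ) (hγ1 : γ ≤ 1) (i j : Fin 3)
    (h : SchwartzMap E3 ℝ) (v : E3) :
    HasFDerivAt (fun x : E3 => ∫ z : E3, amat γ z i j * h (x - z))
      (∫ z : E3, amat γ z i j • fderiv ℝ (⇑h) (v - z)) v := by
  obtain ⟨C, hC, _, hCf⟩ := schwartz_decay h
  apply hasFDerivAt_integral_of_dominated_of_fderiv_le (s := Metric.ball v 1) (Metric.ball_mem_nhds v one_pos)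
    (bound := fun z => 2 * (C * 2 ^ 8) * (‖z‖ ^ (γ + 2) * bbn 8 (v - z)))
    (F' := fun x z => amat γ z i j • fderiv ℝ (⇑h) (x - z))
  · filter_upwards with x
    exact ((amat_cont γ hγ0 i j).mul
      (h.continuous.comp (continuous_const.sub continuous_id))).aestronglyMeasurable
  · exact integrable_conv' γ hγ0 hγ1 i j h v
  · exact ((amat_cont γ hγ0 i j).smul
      (((h.smooth 1).continuous_fderiv (by simp)).comp
        (continuous_const.sub continuous_id))).aestronglyMeasurable
  · filter_upwards with z
    intro x hx
    show ‖amat γ z i j • fderiv ℝ (⇑h) (x - z)‖ ≤ _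
    rw [norm_smul, Real.norm_eq_abs]
    have h3 : bbn 8 (x - z) ≤ 2 ^ 8 * bbn 8 (v - z) := by
      have hvz : 1 + ‖v - z‖ ≤ 2 * (1 + ‖x - z‖) := by
        have h1 : ‖v - z‖ ≤ ‖v - x‖ + ‖x - z‖ := by
          calc ‖v - z‖ = ‖(v - x) + (x - z)‖ := by rw [sub_add_sub_cancel]
            _ ≤ ‖v - x‖ + ‖x - z‖ := norm_add_le _ _
        have h2 : ‖v - x‖ < 1 := by
          rw [Metric.mem_ball, dist_eq_norm] at hx
          rw [norm_sub_rev]; exact hx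
        linarith [norm_nonneg (x - z)]
      have hpow : (1 + ‖v - z‖) ^ (8:ℕ) ≤ 2 ^ 8 * (1 + ‖x - z‖) ^ (8:ℕ) := by
        calc (1 + ‖v - z‖) ^ (8:ℕ) ≤ (2 * (1 + ‖x - z‖)) ^ (8:ℕ) :=
              pow_le_pow_left₀ (by positivity) hvz 8
          _ = 2 ^ 8 * (1 + ‖x - z‖) ^ (8:ℕ) := by rw [mul_pow]
      unfold bbn
      rw [show (2:ℝ) ^ 8 * ((1 + ‖v - z‖) ^ (8:ℕ))⁻¹ = ((1 + ‖v - z‖) ^ (8:ℕ) / 2 ^ 8)⁻¹ by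
        field_simp]
      apply inv_anti₀ (by positivity)
      rw [div_le_iff₀ (by positivity : (0:ℝ) < (2:ℝ) ^ 8)]
      linarith [hpow]
    calc |amat γ z i j| * ‖fderiv ℝ (⇑h) (x - z)‖
        ≤ (2 * ‖z‖ ^ (γ + 2)) * (C * (2 ^ 8 * bbn 8 (v - z))) := by
          refine mul_le_mul (abs_amat_le γ hγ0 z i j) ((hCf _).trans ?_) (norm_nonneg _)
            (by positivity)
          exact mul_le_mul_of_nonneg_left h3 hC.le
      _ = 2 * (C * 2 ^ 8) * (‖z‖ ^ (γ + 2) * bbn 8 (v - z)) := by ring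
  · exact (integrable_kernel γ hγ0 hγ1 v).const_mul _
  · filter_upwards with z
    intro x hx
    have h1 : HasFDerivAt (⇑h) (fderiv ℝ (⇑h) (x - z)) (x - z) :=
      h.differentiableAt.hasFDerivAt
    have h2 : HasFDerivAt (fun x : E3 => x - z) (ContinuousLinearMap.id ℝ E3) x :=
      (hasFDerivAt_id x).sub_const z
    have h3 : HasFDerivAt (fun x : E3 => h (x - z)) (fderiv ℝ (⇑h) (x - z)) x := by
      have := h1.comp x h2
      rw [ContinuousLinearMap.comp_id] at this
      exact this
    simpa using h3.const_mul (amat γ z i j)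

end Stmt11Aux

namespace Stmt11Aux

lemma pd_conv (γ : ℝ) (hγ0 : 0 ≤ γ) (hγ1 : γ ≤ 1) (i j k : Fin 3)
    (h : SchwartzMap E3 ℝ) :
    pd k (conv γ i j h) =
      conv γ i j (LineDeriv.lineDerivOpCLM ℝ (SchwartzMap E3 ℝ) (V := E3) (EuclideanSpace.single k 1) h) := by
  funext v
  have heq : conv γ i j h = fun x => ∫ z : E3, amat γ z i j * h (x - z) :=
    funext fun x => conv_eq γ i j h x
  show fderiv ℝ (conv γ i j h) v (EuclideanSpace.single k 1) = _
  rw [heq, (hasFDerivAt_conv γ hγ0 hγ1 i j h v).fderiv,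
    ContinuousLinearMap.integral_apply (integrable_conv_fderiv γ hγ0 hγ1 i j h v)]
  have hsimp : ∀ z : E3, (amat γ z i j • fderiv ℝ (⇑h) (v - z)) (EuclideanSpace.single k 1)
      = amat γ z i j * (LineDeriv.lineDerivOpCLM ℝ (SchwartzMap E3 ℝ) (V := E3) (EuclideanSpace.single k 1) h) (v - z) := by
    intro z
    rw [ContinuousLinearMap.smul_apply, smul_eq_mul, LineDeriv.lineDerivOpCLM_apply, SchwartzMap.lineDerivOp_apply_eq_fderiv]
  simp only [hsimp]
  exact (conv_eq γ i j _ v).symm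

lemma one_le_jap (v : E3) : 1 ≤ jap v := by
  rw [jap]
  nlinarith [Real.sq_sqrt (show (0:ℝ) ≤ 1 + ‖v‖ ^ 2 by positivity),
    Real.sqrt_nonneg (1 + ‖v‖ ^ 2)]

lemma jap_pos (v : E3) : 0 < jap v := lt_of_lt_of_le one_pos (one_le_jap v)

lemma norm_le_jap (v : E3) : ‖v‖ ≤ jap v := by
  rw [jap]
  nlinarith [Real.sq_sqrt (show (0:ℝ) ≤ 1 + ‖v‖ ^ 2 by positivity),
    Real.sqrt_nonneg (1 + ‖v‖ ^ 2), norm_nonneg v]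

lemma jap_le (v : E3) : jap v ≤ 1 + ‖v‖ := by
  rw [jap]
  calc Real.sqrt (1 + ‖v‖ ^ 2) ≤ Real.sqrt ((1 + ‖v‖) ^ 2) :=
        Real.sqrt_le_sqrt (by nlinarith [norm_nonneg v])
    _ = 1 + ‖v‖ := Real.sqrt_sq (by positivity)

lemma jap_cont : Continuous jap :=
  (continuous_const.add (continuous_norm.pow 2)).sqrt

lemma amat_conv_bound (γ : ℝ) (hγ0 : 0 ≤ γ) (hγ1 : γ ≤ 1) (v w : E3) (i j : Fin 3) :
    |amat γ (v - w) i j| ≤ 16 * (jap v ^ (γ + 2) * jap w ^ (γ + 2)) := by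
  refine (abs_amat_le γ hγ0 _ i j).trans ?_
  have h1 : ‖v - w‖ ≤ 2 * (jap v * jap w) := by
    have hn := norm_sub_le v w
    have hv := norm_le_jap v
    have hw := norm_le_jap w
    have hv1 := one_le_jap v
    have hw1 := one_le_jap w
    nlinarith
  have h2 : ‖v - w‖ ^ (γ + 2) ≤ (2 * (jap v * jap w)) ^ (γ + 2) :=
    Real.rpow_le_rpow (norm_nonneg _) h1 (by linarith)
  have h3 : (2 * (jap v * jap w)) ^ (γ + 2)
      = 2 ^ (γ + 2) * (jap v ^ (γ + 2) * jap w ^ (γ + 2)) := by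
    rw [Real.mul_rpow (by norm_num) (mul_nonneg (jap_pos v).le (jap_pos w).le),
      Real.mul_rpow (jap_pos v).le (jap_pos w).le]
  have h4 : (2:ℝ) ^ (γ + 2) ≤ 8 := by
    have ha : (2:ℝ) ^ (γ + 2) ≤ 2 ^ (3:ℝ) :=
      Real.rpow_le_rpow_of_exponent_le one_le_two (by linarith)
    have hb : (2:ℝ) ^ (3:ℝ) = 8 := by
      rw [show (3:ℝ) = ((3:ℕ):ℝ) by norm_num, Real.rpow_natCast]; norm_num
    linarith
  have hX : (0:ℝ) ≤ jap v ^ (γ + 2) * jap w ^ (γ + 2) := by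
    exact mul_nonneg (Real.rpow_nonneg (jap_pos v).le _) (Real.rpow_nonneg (jap_pos w).le _)
  have h5 : ‖v - w‖ ^ (γ + 2) ≤ 8 * (jap v ^ (γ + 2) * jap w ^ (γ + 2)) := by
    calc ‖v - w‖ ^ (γ + 2) ≤ 2 ^ (γ + 2) * (jap v ^ (γ + 2) * jap w ^ (γ + 2)) :=
          h2.trans_eq h3
      _ ≤ 8 * (jap v ^ (γ + 2) * jap w ^ (γ + 2)) := mul_le_mul_of_nonneg_right h4 hX
  linarith

lemma jap_rpow_le (γ : ℝ) (hγ0 : 0 ≤ γ) (hγ1 : γ ≤ 1) (w : E3) :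
    jap w ^ (γ + 2) ≤ (1 + ‖w‖) ^ (3:ℕ) := by
  calc jap w ^ (γ + 2) ≤ (1 + ‖w‖) ^ (γ + 2) :=
        Real.rpow_le_rpow (jap_pos w).le (jap_le w) (by linarith)
    _ ≤ (1 + ‖w‖) ^ (3:ℝ) :=
        Real.rpow_le_rpow_of_exponent_le (by linarith [norm_nonneg w]) (by linarith)
    _ = (1 + ‖w‖) ^ (3:ℕ) := by rw [← Real.rpow_natCast (1 + ‖w‖) 3]; norm_num

lemma integrable_weight (γ : ℝ) (hγ0 : 0 ≤ γ) (hγ1 : γ ≤ 1) (h : SchwartzMap E3 ℝ) :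
    Integrable (fun w : E3 => |h w| * jap w ^ (γ + 2)) := by
  obtain ⟨C, hC, hCv, _⟩ := schwartz_decay h
  refine ((bbn_integrable (by norm_num : (3:ℕ) < 5)).const_mul C).mono'
    ((h.continuous.abs.mul
      (jap_cont.rpow_const fun w => Or.inl (jap_pos w).ne')).aestronglyMeasurable)
    (Eventually.of_forall fun w => ?_)
  rw [Real.norm_eq_abs, abs_of_nonneg (mul_nonneg (abs_nonneg _)
    (Real.rpow_nonneg (jap_pos w).le _))]
  have hkey : (1 + ‖w‖) ^ (3:ℕ) * bbn 8 w = bbn 5 w := by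
    unfold bbn
    have hpos : (0:ℝ) < 1 + ‖w‖ := by positivity
    field_simp
  calc |h w| * jap w ^ (γ + 2)
      ≤ (C * bbn 8 w) * ((1 + ‖w‖) ^ (3:ℕ)) :=
        mul_le_mul (hCv w) (jap_rpow_le γ hγ0 hγ1 w) (Real.rpow_nonneg (jap_pos w).le _)
          (mul_nonneg hC.le (bbn_pos 8 w).le)
    _ = C * ((1 + ‖w‖) ^ (3:ℕ) * bbn 8 w) := by ring
    _ = C * bbn 5 w := by rw [hkey]

lemma conv_bound (γ : ℝ) (hγ0 : 0 ≤ γ) (hγ1 : γ ≤ 1) (i j : Fin 3)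
    (h : SchwartzMap E3 ℝ) (v : E3) :
    |conv γ i j h v| ≤ 16 * jap v ^ (γ + 2) * ∫ w : E3, |h w| * jap w ^ (γ + 2) := by
  have hInt := (integrable_weight γ hγ0 hγ1 h).const_mul (16 * jap v ^ (γ + 2))
  have hb : ∀ w : E3, ‖amat γ (v - w) i j * h w‖
      ≤ 16 * jap v ^ (γ + 2) * (|h w| * jap w ^ (γ + 2)) := by
    intro w
    rw [Real.norm_eq_abs, abs_mul]
    calc |amat γ (v - w) i j| * |h w|
        ≤ (16 * (jap v ^ (γ + 2) * jap w ^ (γ + 2))) * |h w| :=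
          mul_le_mul_of_nonneg_right (amat_conv_bound γ hγ0 hγ1 v w i j) (abs_nonneg _)
      _ = 16 * jap v ^ (γ + 2) * (|h w| * jap w ^ (γ + 2)) := by ring
  have hle := norm_integral_le_of_norm_le hInt (Eventually.of_forall hb)
  rw [Real.norm_eq_abs] at hle
  refine le_trans hle ?_
  rw [integral_const_mul]

end Stmt11Aux

namespace Stmt11Aux

lemma iter_pd_conv (γ : ℝ) (hγ0 : 0 ≤ γ) (hγ1 : γ ≤ 1) (i j k : Fin 3) (n : ℕ) :
    ∀ h : SchwartzMap E3 ℝ,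
      (pd k)^[n] (conv γ i j h) =
        conv γ i j ((⇑(LineDeriv.lineDerivOpCLM ℝ (SchwartzMap E3 ℝ) (V := E3) (EuclideanSpace.single k 1)))^[n] h) := by
  induction n with
  | zero => intro h; rfl
  | succ n ih =>
      intro h
      rw [Function.iterate_succ_apply, Function.iterate_succ_apply,
        pd_conv γ hγ0 hγ1 i j k h, ih]

lemma pd_coe (k : Fin 3) (h : SchwartzMap E3 ℝ) :
    pd k ⇑h = ⇑(LineDeriv.lineDerivOpCLM ℝ (SchwartzMap E3 ℝ) (V := E3) (EuclideanSpace.single k 1) h) := by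
  funext x
  rw [LineDeriv.lineDerivOpCLM_apply, SchwartzMap.lineDerivOp_apply_eq_fderiv]
  rfl

lemma iter_pd_coe (k : Fin 3) (n : ℕ) :
    ∀ h : SchwartzMap E3 ℝ,
      (pd k)^[n] ⇑h = ⇑((⇑(LineDeriv.lineDerivOpCLM ℝ (SchwartzMap E3 ℝ) (V := E3) (EuclideanSpace.single k 1)))^[n] h) := by
  induction n with
  | zero => intro h; rfl
  | succ n ih =>
      intro h
      rw [Function.iterate_succ_apply, Function.iterate_succ_apply, pd_coe k h, ih]

end Stmt11Aux


/-- For `|β| ≤ 2` there is `C > 0` with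
`|∂^β (a_{ij} * g)(v)| ≤ C ⟨v⟩^{γ+2} ∫ |∂^β g(w)| ⟨w⟩^{γ+2} dw` for all Schwartz `g`. -/
theorem stmt11 (γ : ℝ) (hγ0 : 0 ≤ γ) (hγ1 : γ ≤ 1)
    (β : Fin 3 → ℕ) (hβ : β 0 + β 1 + β 2 ≤ 2) :
    ∃ C > (0 : ℝ), ∀ (g : SchwartzMap E3 ℝ) (v : E3) (i j : Fin 3),
      |multiDeriv β (fun v => ∫ w : E3, amat γ (v - w) i j * g w) v| ≤
        C * jap v ^ (γ + 2) * ∫ w : E3, |multiDeriv β (⇑g) w| * jap w ^ (γ + 2) := by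
  refine ⟨16, by norm_num, fun g v i j => ?_⟩
  open Stmt11Aux in
  have e : (fun v => ∫ w : E3, amat γ (v - w) i j * g w) = Stmt11Aux.conv γ i j g := rfl
  set P : SchwartzMap E3 ℝ :=
    (⇑(LineDeriv.lineDerivOpCLM ℝ (SchwartzMap E3 ℝ) (V := E3) (EuclideanSpace.single 0 1)))^[β 0]
      ((⇑(LineDeriv.lineDerivOpCLM ℝ (SchwartzMap E3 ℝ) (V := E3) (EuclideanSpace.single 1 1)))^[β 1]
        ((⇑(LineDeriv.lineDerivOpCLM ℝ (SchwartzMap E3 ℝ) (V := E3) (EuclideanSpace.single 2 1)))^[β 2] g)) with hP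
  have hF : multiDeriv β (fun v => ∫ w : E3, amat γ (v - w) i j * g w)
      = Stmt11Aux.conv γ i j P := by
    rw [e, multiDeriv, Stmt11Aux.iter_pd_conv γ hγ0 hγ1 i j 2,
      Stmt11Aux.iter_pd_conv γ hγ0 hγ1 i j 1, Stmt11Aux.iter_pd_conv γ hγ0 hγ1 i j 0, hP]
  have hg : multiDeriv β ⇑g = ⇑P := by
    rw [multiDeriv, Stmt11Aux.iter_pd_coe 2, Stmt11Aux.iter_pd_coe 1,
      Stmt11Aux.iter_pd_coe 0, hP]
  rw [hF, hg]
  exact Stmt11Aux.conv_bound γ hγ0 hγ1 i j P v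
end
end

section
/- Let γ ∈ [0,1], p ∈ [1,∞], and let the weight m be either m(v) = ⟨v⟩^k for some k > 0 or m(v) = exp(r⟨v⟩^s) with s ∈ (0,2) and r > 0, or with s = 2 and 0 < r < 1/2. Define the operator A₀ by (A₀ g)(v) := Σ_{i,j} (a_{ij} * g)(v) ∂_{ij} μ(v) − (c * g)(v) μ(v). Then there exists a constant C > 0, depending only on γ, p, m and μ, such that for every g ∈ L¹(⟨v⟩^{γ+2}): ‖A₀ g‖_{L^p(m)} ≤ C ( ‖g‖_{L¹(⟨v⟩^{γ+2})} + ‖g‖_{L¹(⟨v⟩^{γ})} ). -/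
open MeasureTheory Real Filter ENNReal

noncomputable section

/-- `c(z) = -2 (γ+3) |z|^γ`. -/
def cfun (γ : ℝ) (z : E3) : ℝ := -2 * (γ + 3) * ‖z‖ ^ γ

/-- The operator `A₀ g = (a_{ij} * g) ∂_{ij} μ - (c * g) μ`. -/
def A0 (γ : ℝ) (g : E3 → ℝ) (v : E3) : ℝ :=
  (∑ i, ∑ j, (∫ w : E3, amat γ (v - w) i j * g w) * pd i (pd j gauss) v) -
    (∫ w : E3, cfun γ (v - w) * g w) * gauss v

/-- Admissible weights: `m = ⟨v⟩^k` with `k > 0`, or `m = exp(r ⟨v⟩^s)` with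
`s ∈ (0,2), r > 0` or `s = 2, 0 < r < 1/2`. -/
def IsAdmissibleWeight (m : E3 → ℝ) : Prop :=
  (∃ k : ℝ, 0 < k ∧ m = fun v => jap v ^ k) ∨
  (∃ r s : ℝ, ((0 < s ∧ s < 2 ∧ 0 < r) ∨ (s = 2 ∧ 0 < r ∧ r < 1 / 2)) ∧
    m = fun v => Real.exp (r * jap v ^ s))

open scoped RealInnerProductSpace

lemma gauss_pos (v : E3) : 0 < gauss v := by
  unfold gauss
  positivity

lemma hasFDerivAt_normsq (x : E3) :
    HasFDerivAt (fun v : E3 => ‖v‖ ^ 2) ((2 : ℝ) • innerSL ℝ x) x := by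
  have h := (hasFDerivAt_id x).inner ℝ (hasFDerivAt_id x)
  have he : (fun v : E3 => ‖v‖ ^ 2) = fun v : E3 => ⟪v, v⟫ := by
    funext v; rw [real_inner_self_eq_norm_sq]
  rw [he]
  refine h.congr_fderiv ?_
  ext y
  simp [fderivInnerCLM_apply, real_inner_comm, two_mul, mul_comm]

lemma hasFDerivAt_gauss (x : E3) :
    HasFDerivAt gauss ((-gauss x) • innerSL ℝ x) x := by
  have h1 := hasFDerivAt_normsq x
  have h2 : HasFDerivAt (fun v : E3 => -‖v‖ ^ 2 / 2)
      ((-(1:ℝ)/2) • ((2 : ℝ) • innerSL ℝ x)) x := by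
    have := h1.const_mul (-(1:ℝ)/2)
    exact this.congr_of_eventuallyEq (Filter.Eventually.of_forall fun v => by ring)
  have h3 := (Real.hasDerivAt_exp (-‖x‖ ^ 2 / 2)).comp_hasFDerivAt x h2
  have h4 := h3.const_mul ((2 * π) ^ (-(3 : ℝ) / 2))
  have he : gauss = (fun v : E3 => (2 * π) ^ (-(3 : ℝ) / 2) * (Real.exp ∘ fun v : E3 => -‖v‖ ^ 2 / 2) v) := by
    funext v; simp [gauss]
  rw [he]
  refine h4.congr_fderiv ?_
  ext y
  simp only [ContinuousLinearMap.coe_smul', Pi.smul_apply, smul_eq_mul, gauss,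
    Function.comp_apply]
  ring

lemma pd_gauss (j : Fin 3) : pd j gauss = fun v => -(v j * gauss v) := by
  funext v
  rw [pd, (hasFDerivAt_gauss v).fderiv]
  simp only [ContinuousLinearMap.coe_smul', Pi.smul_apply, innerSL_apply_apply,
    EuclideanSpace.inner_single_right, smul_eq_mul, RCLike.inner_apply, conj_trivial]
  ring


lemma hasFDerivAt_pdgauss (j : Fin 3) (x : E3) :
    HasFDerivAt (fun v : E3 => -(v j * gauss v))
      (-(x j • ((-gauss x) • innerSL ℝ x) + gauss x • (EuclideanSpace.proj j : E3 →L[ℝ] ℝ))) x := by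
  have hu : HasFDerivAt (fun v : E3 => v j) (EuclideanSpace.proj j : E3 →L[ℝ] ℝ) x := by
    have := (EuclideanSpace.proj (𝕜 := ℝ) (ι := Fin 3) j).hasFDerivAt (x := x)
    simpa [PiLp.proj_apply] using this
  exact (hu.mul (hasFDerivAt_gauss x)).neg

lemma pd_pd_gauss (i j : Fin 3) (v : E3) :
    pd i (pd j gauss) v = (v i * v j - (if i = j then 1 else 0)) * gauss v := by
  rw [pd, pd_gauss j, (hasFDerivAt_pdgauss j v).fderiv]
  simp only [ContinuousLinearMap.neg_apply, ContinuousLinearMap.add_apply,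
    ContinuousLinearMap.coe_smul', Pi.smul_apply, innerSL_apply_apply,
    EuclideanSpace.inner_single_right, RCLike.inner_apply, conj_trivial, smul_eq_mul,
    PiLp.proj_apply, EuclideanSpace.single_apply]
  rcases eq_or_ne i j with h | h
  · subst h; simp; ring
  · simp [h, Ne.symm h]; ring

lemma abs_coord_le (v : E3) (i : Fin 3) : |v i| ≤ ‖v‖ := by
  have h := abs_real_inner_le_norm v (EuclideanSpace.single i (1:ℝ))
  simpa [EuclideanSpace.inner_single_right, EuclideanSpace.norm_single] using h

lemma abs_pd_pd_gauss (i j : Fin 3) (v : E3) :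
    |pd i (pd j gauss) v| ≤ (1 + ‖v‖ ^ 2) * gauss v := by
  rw [pd_pd_gauss, abs_mul, abs_of_pos (gauss_pos v)]
  have h1 : |v i * v j - (if i = j then 1 else 0)| ≤ 1 + ‖v‖ ^ 2 := by
    have h2 : |v i * v j| ≤ ‖v‖ ^ 2 := by
      rw [abs_mul, sq]
      exact mul_le_mul (abs_coord_le v i) (abs_coord_le v j) (abs_nonneg _) (norm_nonneg _)
    have h3 : |(if i = j then (1:ℝ) else 0)| ≤ 1 := by split <;> simp
    calc |v i * v j - (if i = j then 1 else 0)| ≤ |v i * v j| + |(if i = j then (1:ℝ) else 0)| :=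
          abs_sub _ _
      _ ≤ 1 + ‖v‖ ^ 2 := by linarith
  exact mul_le_mul_of_nonneg_right h1 (gauss_pos v).le

lemma one_le_jap (v : E3) : 1 ≤ jap v := by
  rw [jap]
  nlinarith [Real.sq_sqrt (by positivity : (0:ℝ) ≤ 1 + ‖v‖^2),
    Real.sqrt_nonneg (1 + ‖v‖^2), sq_nonneg ‖v‖]

lemma jap_pos (v : E3) : 0 < jap v := lt_of_lt_of_le one_pos (one_le_jap v)

lemma jap_sq (v : E3) : jap v ^ (2:ℕ) = 1 + ‖v‖ ^ 2 := by
  rw [jap]; exact Real.sq_sqrt (by positivity)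

lemma norm_le_jap (v : E3) : ‖v‖ ≤ jap v := by
  nlinarith [jap_sq v, jap_pos v, norm_nonneg v]

lemma jap_rpow_le (v : E3) {a b : ℝ} (hab : a ≤ b) : jap v ^ a ≤ jap v ^ b :=
  Real.rpow_le_rpow_of_exponent_le (one_le_jap v) hab

lemma norm_sub_le_two_jap (v w : E3) : ‖v - w‖ ≤ 2 * (jap v * jap w) := by
  have h1 : ‖v‖ ≤ jap v * jap w :=
    le_trans (norm_le_jap v) (le_mul_of_one_le_right (jap_pos v).le (one_le_jap w))
  have h2 : ‖w‖ ≤ jap v * jap w := by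
    have := le_mul_of_one_le_left (jap_pos w).le (one_le_jap v)
    exact le_trans (norm_le_jap w) this
  calc ‖v - w‖ ≤ ‖v‖ + ‖w‖ := norm_sub_le v w
    _ ≤ 2 * (jap v * jap w) := by linarith

lemma rpow_sub_bound {α : ℝ} (h0 : 0 ≤ α) (h3 : α ≤ 3) (v w : E3) :
    ‖v - w‖ ^ α ≤ 8 * (jap v ^ (3:ℝ) * jap w ^ α) := by
  have key : ‖v - w‖ ^ α ≤ (2 * (jap v * jap w)) ^ α :=
    Real.rpow_le_rpow (norm_nonneg _) (norm_sub_le_two_jap v w) h0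
  have he : (2 * (jap v * jap w)) ^ α = 2 ^ α * (jap v ^ α * jap w ^ α) := by
    rw [Real.mul_rpow (by norm_num) (mul_nonneg (jap_pos v).le (jap_pos w).le),
        Real.mul_rpow (jap_pos v).le (jap_pos w).le]
  have h2 : (2:ℝ) ^ α ≤ 8 := by
    calc (2:ℝ) ^ α ≤ 2 ^ (3:ℝ) := Real.rpow_le_rpow_of_exponent_le one_le_two h3
      _ = 8 := by
        rw [show (3:ℝ) = ((3:ℕ):ℝ) by norm_num, Real.rpow_natCast]; norm_num
  have hj : jap v ^ α ≤ jap v ^ (3:ℝ) := jap_rpow_le v h3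
  calc ‖v - w‖ ^ α ≤ 2 ^ α * (jap v ^ α * jap w ^ α) := by rw [← he]; exact key
    _ ≤ 8 * (jap v ^ (3:ℝ) * jap w ^ α) := by
        have hw : (0:ℝ) ≤ jap w ^ α := (Real.rpow_pos_of_pos (jap_pos w) α).le
        have hv : (0:ℝ) ≤ jap v ^ α := (Real.rpow_pos_of_pos (jap_pos v) α).le
        have h4 : 2 ^ α * jap v ^ α ≤ 8 * jap v ^ (3:ℝ) :=
          mul_le_mul h2 hj hv (by norm_num)
        calc 2 ^ α * (jap v ^ α * jap w ^ α) = (2 ^ α * jap v ^ α) * jap w ^ α := by ring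
          _ ≤ (8 * jap v ^ (3:ℝ)) * jap w ^ α := mul_le_mul_of_nonneg_right h4 hw
          _ = 8 * (jap v ^ (3:ℝ) * jap w ^ α) := by ring

lemma abs_amat_le (γ : ℝ) (hγ0 : 0 ≤ γ) (z : E3) (i j : Fin 3) :
    |amat γ z i j| ≤ 2 * ‖z‖ ^ (γ + 2) := by
  rw [amat, abs_mul, abs_of_nonneg (Real.rpow_nonneg (norm_nonneg z) _)]
  have h : |(if i = j then (1:ℝ) else 0) - z i * z j / ‖z‖ ^ 2| ≤ 2 := by
    rcases eq_or_ne z 0 with hz | hz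
    · subst hz
      simp only [show ((0:E3)) i = 0 from rfl, show ((0:E3)) j = 0 from rfl]
      split <;> norm_num
    · have hz' : (0:ℝ) < ‖z‖ := norm_pos_iff.mpr hz
      have h1 : |z i * z j / ‖z‖ ^ 2| ≤ 1 := by
        rw [abs_div, abs_mul, abs_of_pos (by positivity : (0:ℝ) < ‖z‖^2)]
        rw [div_le_one (by positivity)]
        calc |z i| * |z j| ≤ ‖z‖ * ‖z‖ :=
              mul_le_mul (abs_coord_le z i) (abs_coord_le z j) (abs_nonneg _) (norm_nonneg _)
          _ = ‖z‖ ^ 2 := (sq ‖z‖).symm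
      have h2 : |(if i = j then (1:ℝ) else 0)| ≤ 1 := by split <;> norm_num
      calc |(if i = j then (1:ℝ) else 0) - z i * z j / ‖z‖ ^ 2|
          ≤ |(if i = j then (1:ℝ) else 0)| + |z i * z j / ‖z‖ ^ 2| := abs_sub _ _
        _ ≤ 2 := by linarith
  calc ‖z‖ ^ (γ + 2) * |(if i = j then (1:ℝ) else 0) - z i * z j / ‖z‖ ^ 2|
      ≤ ‖z‖ ^ (γ + 2) * 2 := by
        exact mul_le_mul_of_nonneg_left h (Real.rpow_nonneg (norm_nonneg z) _)
    _ = 2 * ‖z‖ ^ (γ + 2) := by ring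

lemma abs_cfun_le (γ : ℝ) (hγ0 : 0 ≤ γ) (hγ1 : γ ≤ 1) (z : E3) :
    |cfun γ z| ≤ 8 * ‖z‖ ^ γ := by
  rw [cfun]
  rw [show -2 * (γ + 3) * ‖z‖ ^ γ = -(2 * (γ + 3) * ‖z‖ ^ γ) by ring, abs_neg]
  rw [abs_of_nonneg (by positivity)]
  have : (0:ℝ) ≤ ‖z‖ ^ γ := Real.rpow_nonneg (norm_nonneg z) _
  nlinarith


lemma jap_continuous : Continuous jap := by
  apply Real.continuous_sqrt.comp
  exact (continuous_const.add ((continuous_norm).pow 2))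

lemma integrable_lower {γ : ℝ} (hγ0 : 0 ≤ γ) (g : E3 → ℝ)
    (hg : Integrable (fun w : E3 => |g w| * jap w ^ (γ + 2))) :
    Integrable (fun w : E3 => |g w| * jap w ^ γ) := by
  have hm : AEStronglyMeasurable (fun w : E3 => |g w| * jap w ^ γ) volume := by
    have h1 := hg.aestronglyMeasurable
    have h2 : Continuous fun w : E3 => jap w ^ (-(2:ℝ)) := by
      apply Continuous.rpow_const jap_continuous
      intro x; exact Or.inl (jap_pos x).ne'
    have he : (fun w : E3 => |g w| * jap w ^ γ)
        = fun w => (|g w| * jap w ^ (γ + 2)) * jap w ^ (-(2:ℝ)) := by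
      funext w
      rw [mul_assoc, ← Real.rpow_add (jap_pos w)]
      norm_num
    rw [he]
    exact h1.mul h2.aestronglyMeasurable
  refine hg.mono' hm (Filter.Eventually.of_forall fun w => ?_)
  rw [Real.norm_eq_abs, abs_mul, abs_abs,
    abs_of_nonneg (Real.rpow_nonneg (jap_pos w).le _)]
  exact mul_le_mul_of_nonneg_left (jap_rpow_le w (by linarith)) (abs_nonneg _)

lemma conv_amat_bound {γ : ℝ} (hγ0 : 0 ≤ γ) (hγ1 : γ ≤ 1) (g : E3 → ℝ)
    (hg : Integrable (fun w : E3 => |g w| * jap w ^ (γ + 2))) (v : E3) (i j : Fin 3) :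
    |∫ w : E3, amat γ (v - w) i j * g w| ≤
      16 * jap v ^ (3:ℝ) * ∫ w : E3, |g w| * jap w ^ (γ + 2) := by
  have h1 : ∀ w : E3, ‖amat γ (v - w) i j * g w‖ ≤
      (16 * jap v ^ (3:ℝ)) * (|g w| * jap w ^ (γ + 2)) := by
    intro w
    rw [Real.norm_eq_abs, abs_mul]
    calc |amat γ (v - w) i j| * |g w| ≤ (2 * ‖v - w‖ ^ (γ + 2)) * |g w| :=
          mul_le_mul_of_nonneg_right (abs_amat_le γ hγ0 (v - w) i j) (abs_nonneg _)
      _ ≤ (2 * (8 * (jap v ^ (3:ℝ) * jap w ^ (γ + 2)))) * |g w| := by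
          refine mul_le_mul_of_nonneg_right (mul_le_mul_of_nonneg_left ?_ (by norm_num))
            (abs_nonneg _)
          exact rpow_sub_bound (by linarith) (by linarith) v w
      _ = (16 * jap v ^ (3:ℝ)) * (|g w| * jap w ^ (γ + 2)) := by ring
  calc |∫ w : E3, amat γ (v - w) i j * g w|
      ≤ ∫ w : E3, ‖amat γ (v - w) i j * g w‖ := by
        rw [← Real.norm_eq_abs]; exact norm_integral_le_integral_norm _
    _ ≤ ∫ w : E3, (16 * jap v ^ (3:ℝ)) * (|g w| * jap w ^ (γ + 2)) := by
        refine integral_mono_of_nonneg (Filter.Eventually.of_forall fun w => norm_nonneg _)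
          (hg.const_mul _) (Filter.Eventually.of_forall h1)
    _ = 16 * jap v ^ (3:ℝ) * ∫ w : E3, |g w| * jap w ^ (γ + 2) := integral_const_mul _ _

lemma conv_cfun_bound {γ : ℝ} (hγ0 : 0 ≤ γ) (hγ1 : γ ≤ 1) (g : E3 → ℝ)
    (hg : Integrable (fun w : E3 => |g w| * jap w ^ (γ + 2))) (v : E3) :
    |∫ w : E3, cfun γ (v - w) * g w| ≤
      64 * jap v ^ (3:ℝ) * ∫ w : E3, |g w| * jap w ^ γ := by
  have hg' := integrable_lower hγ0 g hg
  have h1 : ∀ w : E3, ‖cfun γ (v - w) * g w‖ ≤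
      (64 * jap v ^ (3:ℝ)) * (|g w| * jap w ^ γ) := by
    intro w
    rw [Real.norm_eq_abs, abs_mul]
    calc |cfun γ (v - w)| * |g w| ≤ (8 * ‖v - w‖ ^ γ) * |g w| :=
          mul_le_mul_of_nonneg_right (abs_cfun_le γ hγ0 hγ1 (v - w)) (abs_nonneg _)
      _ ≤ (8 * (8 * (jap v ^ (3:ℝ) * jap w ^ γ))) * |g w| := by
          refine mul_le_mul_of_nonneg_right (mul_le_mul_of_nonneg_left ?_ (by norm_num))
            (abs_nonneg _)
          exact rpow_sub_bound hγ0 (by linarith) v w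
      _ = (64 * jap v ^ (3:ℝ)) * (|g w| * jap w ^ γ) := by ring
  calc |∫ w : E3, cfun γ (v - w) * g w|
      ≤ ∫ w : E3, ‖cfun γ (v - w) * g w‖ := by
        rw [← Real.norm_eq_abs]; exact norm_integral_le_integral_norm _
    _ ≤ ∫ w : E3, (64 * jap v ^ (3:ℝ)) * (|g w| * jap w ^ γ) := by
        refine integral_mono_of_nonneg (Filter.Eventually.of_forall fun w => norm_nonneg _)
          (hg'.const_mul _) (Filter.Eventually.of_forall h1)
    _ = 64 * jap v ^ (3:ℝ) * ∫ w : E3, |g w| * jap w ^ γ := integral_const_mul _ _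

lemma A0_pointwise_bound {γ : ℝ} (hγ0 : 0 ≤ γ) (hγ1 : γ ≤ 1) (g : E3 → ℝ)
    (hg : Integrable (fun w : E3 => |g w| * jap w ^ (γ + 2))) (v : E3) :
    |A0 γ g v| ≤ (208 * ((∫ w : E3, |g w| * jap w ^ (γ + 2)) +
        (∫ w : E3, |g w| * jap w ^ γ))) * (jap v ^ (5:ℝ) * gauss v) := by
  set I1 := ∫ w : E3, |g w| * jap w ^ (γ + 2) with hI1
  set I2 := ∫ w : E3, |g w| * jap w ^ γ with hI2
  have hI1nn : 0 ≤ I1 := integral_nonneg fun w =>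
    mul_nonneg (abs_nonneg _) (Real.rpow_nonneg (jap_pos w).le _)
  have hI2nn : 0 ≤ I2 := integral_nonneg fun w =>
    mul_nonneg (abs_nonneg _) (Real.rpow_nonneg (jap_pos w).le _)
  have hJ5 : (1 + ‖v‖ ^ 2) * jap v ^ (3:ℝ) = jap v ^ (5:ℝ) := by
    rw [← jap_sq v, ← Real.rpow_natCast (jap v) 2, ← Real.rpow_add (jap_pos v)]
    norm_num
  have hterm : ∀ i j : Fin 3, |(∫ w : E3, amat γ (v - w) i j * g w) * pd i (pd j gauss) v|
      ≤ 16 * I1 * (jap v ^ (5:ℝ) * gauss v) := by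
    intro i j
    rw [abs_mul]
    calc |∫ w : E3, amat γ (v - w) i j * g w| * |pd i (pd j gauss) v|
        ≤ (16 * jap v ^ (3:ℝ) * I1) * ((1 + ‖v‖ ^ 2) * gauss v) := by
          refine mul_le_mul (conv_amat_bound hγ0 hγ1 g hg v i j) (abs_pd_pd_gauss i j v)
            (abs_nonneg _) ?_
          exact mul_nonneg (mul_nonneg (by norm_num)
            (Real.rpow_nonneg (jap_pos v).le _)) hI1nn
      _ = 16 * I1 * (((1 + ‖v‖ ^ 2) * jap v ^ (3:ℝ)) * gauss v) := by ring
      _ = 16 * I1 * (jap v ^ (5:ℝ) * gauss v) := by rw [hJ5]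
  have hsum : |∑ i : Fin 3, ∑ j : Fin 3,
      (∫ w : E3, amat γ (v - w) i j * g w) * pd i (pd j gauss) v|
      ≤ 144 * I1 * (jap v ^ (5:ℝ) * gauss v) := by
    calc |∑ i : Fin 3, ∑ j : Fin 3,
        (∫ w : E3, amat γ (v - w) i j * g w) * pd i (pd j gauss) v|
        ≤ ∑ i : Fin 3, ∑ j : Fin 3,
            |(∫ w : E3, amat γ (v - w) i j * g w) * pd i (pd j gauss) v| := by
          refine le_trans (Finset.abs_sum_le_sum_abs _ _) ?_
          refine Finset.sum_le_sum fun i _ => Finset.abs_sum_le_sum_abs _ _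
      _ ≤ ∑ _i : Fin 3, ∑ _j : Fin 3, 16 * I1 * (jap v ^ (5:ℝ) * gauss v) := by
          refine Finset.sum_le_sum fun i _ => Finset.sum_le_sum fun j _ => hterm i j
      _ = 144 * I1 * (jap v ^ (5:ℝ) * gauss v) := by
          simp [Finset.sum_const]
          ring
  have hc : |(∫ w : E3, cfun γ (v - w) * g w) * gauss v|
      ≤ 64 * I2 * (jap v ^ (5:ℝ) * gauss v) := by
    rw [abs_mul, abs_of_pos (gauss_pos v)]
    calc |∫ w : E3, cfun γ (v - w) * g w| * gauss v
        ≤ (64 * jap v ^ (3:ℝ) * I2) * gauss v :=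
          mul_le_mul_of_nonneg_right (conv_cfun_bound hγ0 hγ1 g hg v) (gauss_pos v).le
      _ ≤ (64 * jap v ^ (5:ℝ) * I2) * gauss v := by
          refine mul_le_mul_of_nonneg_right ?_ (gauss_pos v).le
          refine mul_le_mul_of_nonneg_right ?_ hI2nn
          exact mul_le_mul_of_nonneg_left (jap_rpow_le v (by norm_num)) (by norm_num)
      _ = 64 * I2 * (jap v ^ (5:ℝ) * gauss v) := by ring
  have hB : 0 ≤ jap v ^ (5:ℝ) * gauss v :=
    mul_nonneg (Real.rpow_nonneg (jap_pos v).le _) (gauss_pos v).le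
  calc |A0 γ g v| ≤ |∑ i : Fin 3, ∑ j : Fin 3,
        (∫ w : E3, amat γ (v - w) i j * g w) * pd i (pd j gauss) v|
        + |(∫ w : E3, cfun γ (v - w) * g w) * gauss v| := abs_sub _ _
    _ ≤ 144 * I1 * (jap v ^ (5:ℝ) * gauss v) + 64 * I2 * (jap v ^ (5:ℝ) * gauss v) := by
        exact add_le_add hsum hc
    _ ≤ (208 * (I1 + I2)) * (jap v ^ (5:ℝ) * gauss v) := by nlinarith

lemma poly_le_exp {α ε : ℝ} (hα : 0 ≤ α) (hε : 0 < ε) :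
    ∃ C : ℝ, 0 < C ∧ ∀ y : ℝ, 0 ≤ y → (1 + y) ^ α ≤ C * Real.exp (ε * y) := by
  set c : ℝ := min 1 (ε / (α + 1)) with hc
  have hc0 : 0 < c := lt_min one_pos (by positivity)
  have hc1 : c ≤ 1 := min_le_left _ _
  have hcε : α * c ≤ ε := by
    have h1 : c ≤ ε / (α + 1) := min_le_right _ _
    have h2 : α * c ≤ α * (ε / (α + 1)) := mul_le_mul_of_nonneg_left h1 hα
    have h3 : α * (ε / (α + 1)) ≤ ε := by
      rw [mul_div_assoc']
      rw [div_le_iff₀ (by positivity)]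
      nlinarith
    linarith
  refine ⟨c ^ (-α), Real.rpow_pos_of_pos hc0 _, fun y hy => ?_⟩
  have h1 : 1 + y ≤ c⁻¹ * (1 + c * y) := by
    have hcy : c * (1 + y) ≤ 1 + c * y := by nlinarith
    have h := mul_le_mul_of_nonneg_left hcy (inv_nonneg.mpr hc0.le)
    rwa [inv_mul_cancel_left₀ hc0.ne'] at h
  have h2 : (1 + y) ^ α ≤ (c⁻¹ * (1 + c * y)) ^ α :=
    Real.rpow_le_rpow (by linarith) h1 hα
  have h3 : (c⁻¹ * (1 + c * y)) ^ α = c ^ (-α) * (1 + c * y) ^ α := by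
    rw [Real.mul_rpow (by positivity) (by nlinarith), Real.inv_rpow hc0.le,
      ← Real.rpow_neg hc0.le]
  have h4 : (1 + c * y) ^ α ≤ Real.exp (ε * y) := by
    have h5 : 1 + c * y ≤ Real.exp (c * y) := by
      have := Real.add_one_le_exp (c * y)
      linarith
    calc (1 + c * y) ^ α ≤ Real.exp (c * y) ^ α :=
          Real.rpow_le_rpow (by nlinarith) h5 hα
      _ = Real.exp (c * y * α) := (Real.exp_mul _ _).symm
      _ ≤ Real.exp (ε * y) := by
          apply Real.exp_le_exp.mpr
          nlinarith
  calc (1 + y) ^ α ≤ c ^ (-α) * (1 + c * y) ^ α := by rw [← h3]; exact h2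
    _ ≤ c ^ (-α) * Real.exp (ε * y) :=
        mul_le_mul_of_nonneg_left h4 (Real.rpow_nonneg hc0.le _)

lemma rpow_le_one_add {y β : ℝ} (hy : 0 ≤ y) (hβ0 : 0 ≤ β) (hβ1 : β ≤ 1) :
    y ^ β ≤ 1 + y := by
  rcases le_or_gt y 1 with h | h
  · calc y ^ β ≤ 1 ^ β := Real.rpow_le_rpow hy h hβ0
      _ = 1 := Real.one_rpow _
      _ ≤ 1 + y := by linarith
  · calc y ^ β ≤ y ^ (1:ℝ) := Real.rpow_le_rpow_of_exponent_le h.le hβ1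
      _ = y := Real.rpow_one _
      _ ≤ 1 + y := by linarith

lemma lin_bound {β r : ℝ} (hβ0 : 0 ≤ β) (hβ1 : β < 1) (hr : 0 < r) :
    ∃ c0 : ℝ, 0 ≤ c0 ∧ ∀ y : ℝ, 0 ≤ y → r * (1 + y) ^ β ≤ c0 + y / 8 := by
  set lam : ℝ := min 1 ((1 / (8 * r)) ^ (1 / (1 - β))) with hlam
  have hl0 : 0 < lam := lt_min one_pos (Real.rpow_pos_of_pos (by positivity) _)
  have hl1 : lam ≤ 1 := min_le_left _ _
  have hkey : r * lam ^ (1 - β) ≤ 1 / 8 := by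
    have h1 : lam ≤ (1 / (8 * r)) ^ (1 / (1 - β)) := min_le_right _ _
    have h2 : lam ^ (1 - β) ≤ ((1 / (8 * r)) ^ (1 / (1 - β))) ^ (1 - β) :=
      Real.rpow_le_rpow hl0.le h1 (by linarith)
    have h3 : ((1 / (8 * r)) ^ (1 / (1 - β))) ^ (1 - β) = 1 / (8 * r) := by
      rw [← Real.rpow_mul (by positivity), one_div_mul_cancel (by linarith : (1:ℝ) - β ≠ 0),
        Real.rpow_one]
    rw [h3] at h2
    calc r * lam ^ (1 - β) ≤ r * (1 / (8 * r)) := mul_le_mul_of_nonneg_left h2 hr.le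
      _ = 1 / 8 := by field_simp
  refine ⟨r * lam ^ (-β) * (1 + lam), by positivity, fun y hy => ?_⟩
  have h4 : (1 + y) ^ β ≤ lam ^ (-β) * (1 + lam * (1 + y)) := by
    have h5 : (lam * (1 + y)) ^ β = lam ^ β * (1 + y) ^ β :=
      Real.mul_rpow hl0.le (by linarith)
    have h6 : (lam * (1 + y)) ^ β ≤ 1 + lam * (1 + y) :=
      rpow_le_one_add (by positivity) hβ0 hβ1.le
    have h7 : (1 + y) ^ β = lam ^ (-β) * (lam * (1 + y)) ^ β := by
      rw [h5, ← mul_assoc, ← Real.rpow_add hl0]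
      simp
    rw [h7]
    exact mul_le_mul_of_nonneg_left h6 (Real.rpow_nonneg hl0.le _)
  have h8 : r * (1 + y) ^ β ≤ r * lam ^ (-β) * (1 + lam) + (r * lam ^ (1 - β)) * y := by
    have := mul_le_mul_of_nonneg_left h4 hr.le
    have he : lam ^ (-β) * lam = lam ^ (1 - β) := by
      nth_rewrite 2 [← Real.rpow_one lam]
      rw [← Real.rpow_add hl0]
      ring_nf
    have hexp : r * (lam ^ (-β) * (1 + lam * (1 + y)))
        = r * lam ^ (-β) * (1 + lam) + (r * lam ^ (1 - β)) * y := by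
      rw [← he]; ring
    linarith
  have h9 : (r * lam ^ (1 - β)) * y ≤ y / 8 := by
    calc (r * lam ^ (1 - β)) * y ≤ (1 / 8) * y := mul_le_mul_of_nonneg_right hkey hy
      _ = y / 8 := by ring
  linarith

lemma jap_rpow_eq (v : E3) (t : ℝ) : jap v ^ t = (1 + ‖v‖ ^ 2) ^ (t / 2) := by
  rw [jap, Real.sqrt_eq_rpow, ← Real.rpow_mul (by positivity)]
  ring_nf

lemma weight_bound {m : E3 → ℝ} (hm : IsAdmissibleWeight m) :
    ∃ Cm : ℝ, 0 < Cm ∧ ∃ δ : ℝ, 0 < δ ∧ ∀ v : E3,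
      0 ≤ m v ∧ m v ≤ Cm * Real.exp ((1 / 2 - 2 * δ) * ‖v‖ ^ 2) := by
  rcases hm with ⟨k, hk, rfl⟩ | ⟨r, s, hrs, rfl⟩
  · obtain ⟨C, hC, hbound⟩ := poly_le_exp (α := k / 2) (ε := 1 / 8) (by linarith) (by norm_num)
    refine ⟨C, hC, 3 / 16, by norm_num, fun v => ?_⟩
    constructor
    · exact Real.rpow_nonneg (jap_pos v).le _

    · show jap v ^ k ≤ _
      rw [jap_rpow_eq]
      have := hbound (‖v‖ ^ 2) (by positivity)
      convert this using 3
      norm_num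
  · rcases hrs with ⟨hs0, hs2, hr⟩ | ⟨hs2, hr0, hr2⟩
    · obtain ⟨c0, hc0, hbound⟩ := lin_bound (β := s / 2) (r := r)
        (by linarith) (by linarith) hr
      refine ⟨Real.exp c0, Real.exp_pos _, 3 / 16, by norm_num, fun v => ?_⟩
      refine ⟨(Real.exp_pos _).le, ?_⟩
      show Real.exp (r * jap v ^ s) ≤ _
      rw [jap_rpow_eq, ← Real.exp_add]
      apply Real.exp_le_exp.mpr
      have := hbound (‖v‖ ^ 2) (by positivity)
      have h2 : (1 / 2 : ℝ) - 2 * (3 / 16) = 1 / 8 := by norm_num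
      rw [h2]
      calc r * (1 + ‖v‖ ^ 2) ^ (s / 2) ≤ c0 + ‖v‖ ^ 2 / 8 := this
        _ = c0 + 1 / 8 * ‖v‖ ^ 2 := by ring
    · subst hs2
      refine ⟨Real.exp r, Real.exp_pos _, 1 / 4 - r / 2, by linarith, fun v => ?_⟩
      refine ⟨(Real.exp_pos _).le, ?_⟩
      show Real.exp (r * jap v ^ (2:ℝ)) ≤ _
      rw [jap_rpow_eq, ← Real.exp_add]
      apply Real.exp_le_exp.mpr
      have he : ((2:ℝ)) / 2 = 1 := by norm_num
      rw [he, Real.rpow_one]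
      ring_nf
      nlinarith [sq_nonneg ‖v‖]

lemma integrable_exp_neg_mul_sq_norm {b : ℝ} (hb : 0 < b) :
    Integrable (fun v : E3 => Real.exp (-b * ‖v‖ ^ 2)) := by
  have h := (GaussianFourier.integrable_cexp_neg_mul_sq_norm_add (V := E3)
      (b := (b : ℂ)) (by simpa using hb) 0 0).norm
  refine h.congr (Filter.Eventually.of_forall fun v => ?_)
  have : ((‖v‖:ℂ) ^ 2).re = ‖v‖ ^ 2 := by
    norm_cast
  simp [Complex.norm_exp, this]

lemma memLp_exp_neg_sq {δ : ℝ} (hδ : 0 < δ) (p : ℝ≥0∞) (hp : 1 ≤ p) :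
    MemLp (fun v : E3 => Real.exp (-δ * ‖v‖ ^ 2)) p volume := by
  have hcont : Continuous fun v : E3 => Real.exp (-δ * ‖v‖ ^ 2) :=
    Real.continuous_exp.comp (by continuity)
  by_cases hptop : p = ⊤
  · subst hptop
    refine memLp_top_of_bound hcont.aestronglyMeasurable 1
      (Filter.Eventually.of_forall fun v => ?_)
    rw [Real.norm_eq_abs, abs_of_pos (Real.exp_pos _)]
    exact Real.exp_le_one_iff.mpr (by nlinarith [sq_nonneg ‖v‖])
  · refine ⟨hcont.aestronglyMeasurable, ?_⟩
    have hp0 : p ≠ 0 := by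
      intro h; rw [h] at hp; simp at hp
    rw [eLpNorm_lt_top_iff_lintegral_rpow_enorm_lt_top hp0 hptop]
    have hpr : 0 < p.toReal := ENNReal.toReal_pos hp0 hptop
    have hInt : Integrable (fun v : E3 => Real.exp (-(δ * p.toReal) * ‖v‖ ^ 2)) :=
      integrable_exp_neg_mul_sq_norm (by positivity)
    have hlint : (∫⁻ v : E3, ↑‖Real.exp (-(δ * p.toReal) * ‖v‖ ^ 2)‖₊) < ⊤ :=
      hInt.hasFiniteIntegral
    refine lt_of_le_of_lt (le_of_eq ?_) hlint
    apply lintegral_congr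
    intro v
    rw [← enorm_eq_nnnorm, ← ofReal_norm, ← ofReal_norm,
      Real.norm_eq_abs, Real.norm_eq_abs, abs_of_pos (Real.exp_pos _),
      abs_of_pos (Real.exp_pos _), ENNReal.ofReal_rpow_of_pos (Real.exp_pos _),
      ← Real.exp_mul]
    congr 1
    ring

/-- `‖A₀ g‖_{L^p(m)} ≤ C (‖g‖_{L¹(⟨v⟩^{γ+2})} + ‖g‖_{L¹(⟨v⟩^γ)})`. -/
theorem stmt13 (γ : ℝ) (hγ0 : 0 ≤ γ) (hγ1 : γ ≤ 1) (p : ℝ≥0∞) (hp : 1 ≤ p)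
    (m : E3 → ℝ) (hm : IsAdmissibleWeight m) :
    ∃ C > (0 : ℝ), ∀ g : E3 → ℝ,
      Integrable (fun w : E3 => |g w| * jap w ^ (γ + 2)) →
      eLpNorm (fun v => m v * A0 γ g v) p volume ≤
        ENNReal.ofReal (C * ((∫ w : E3, |g w| * jap w ^ (γ + 2)) +
          (∫ w : E3, |g w| * jap w ^ γ))) := by
  obtain ⟨Cm, hCm, δ, hδ, hmw⟩ := weight_bound hm
  obtain ⟨C5, hC5, h5⟩ := poly_le_exp (α := 5 / 2) (ε := δ) (by norm_num) hδ
  have hcGpos : 0 < (2 * π) ^ (-(3 : ℝ) / 2) := Real.rpow_pos_of_pos (by positivity) _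
  set Φ : E3 → ℝ := fun v => m v * (jap v ^ (5:ℝ) * gauss v) with hΦdef
  have hΦnn : ∀ v : E3, 0 ≤ Φ v := fun v =>
    mul_nonneg (hmw v).1 (mul_nonneg (Real.rpow_nonneg (jap_pos v).le _) (gauss_pos v).le)
  have hΦ : ∀ v : E3, Φ v ≤ (Cm * C5 * (2 * π) ^ (-(3 : ℝ) / 2)) * Real.exp (-δ * ‖v‖ ^ 2) := by
    intro v
    have h1 := (hmw v).2
    have h2 : jap v ^ (5:ℝ) ≤ C5 * Real.exp (δ * ‖v‖ ^ 2) := by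
      rw [jap_rpow_eq]
      exact h5 (‖v‖ ^ 2) (by positivity)
    have step1 : Φ v ≤ (Cm * Real.exp ((1 / 2 - 2 * δ) * ‖v‖ ^ 2)) *
        ((C5 * Real.exp (δ * ‖v‖ ^ 2)) * gauss v) := by
      refine mul_le_mul h1 (mul_le_mul_of_nonneg_right h2 (gauss_pos v).le)
        (mul_nonneg (Real.rpow_nonneg (jap_pos v).le _) (gauss_pos v).le) ?_
      positivity
    have e1 : Real.exp ((1 / 2 - 2 * δ) * ‖v‖ ^ 2) * Real.exp (δ * ‖v‖ ^ 2) *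
        Real.exp (-‖v‖ ^ 2 / 2) = Real.exp (-δ * ‖v‖ ^ 2) := by
      rw [← Real.exp_add, ← Real.exp_add]
      congr 1
      ring
    have step2 : (Cm * Real.exp ((1 / 2 - 2 * δ) * ‖v‖ ^ 2)) *
        ((C5 * Real.exp (δ * ‖v‖ ^ 2)) * gauss v)
        = (Cm * C5 * (2 * π) ^ (-(3 : ℝ) / 2)) * Real.exp (-δ * ‖v‖ ^ 2) := by
      rw [gauss, ← e1]
      ring
    calc Φ v ≤ _ := step1
      _ = _ := step2
  have hfin : eLpNorm (fun v : E3 => (Cm * C5 * (2 * π) ^ (-(3 : ℝ) / 2)) *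
      Real.exp (-δ * ‖v‖ ^ 2)) p volume < ⊤ :=
    ((memLp_exp_neg_sq hδ p hp).const_mul _).eLpNorm_lt_top
  have hDfin : eLpNorm Φ p volume < ⊤ := by
    refine lt_of_le_of_lt (eLpNorm_mono_real fun v => ?_) hfin
    rw [Real.norm_eq_abs, abs_of_nonneg (hΦnn v)]
    exact hΦ v
  set D : ℝ := (eLpNorm Φ p volume).toReal with hDdef
  have hDnn : 0 ≤ D := ENNReal.toReal_nonneg
  have hDD : eLpNorm Φ p volume ≤ ENNReal.ofReal (D + 1) := by
    rw [← ENNReal.ofReal_toReal hDfin.ne]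
    exact ENNReal.ofReal_le_ofReal (by linarith)
  refine ⟨208 * (D + 1), by positivity, fun g hg => ?_⟩
  set I1 : ℝ := ∫ w : E3, |g w| * jap w ^ (γ + 2) with hI1def
  set I2 : ℝ := ∫ w : E3, |g w| * jap w ^ γ with hI2def
  have hI1nn : 0 ≤ I1 := integral_nonneg fun w =>
    mul_nonneg (abs_nonneg _) (Real.rpow_nonneg (jap_pos w).le _)
  have hI2nn : 0 ≤ I2 := integral_nonneg fun w =>
    mul_nonneg (abs_nonneg _) (Real.rpow_nonneg (jap_pos w).le _)
  have hpt : ∀ v : E3, ‖m v * A0 γ g v‖ ≤ (208 * (I1 + I2)) * Φ v := by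
    intro v
    rw [Real.norm_eq_abs, abs_mul, abs_of_nonneg (hmw v).1]
    calc m v * |A0 γ g v|
        ≤ m v * ((208 * (I1 + I2)) * (jap v ^ (5:ℝ) * gauss v)) :=
          mul_le_mul_of_nonneg_left (A0_pointwise_bound hγ0 hγ1 g hg v) (hmw v).1
      _ = (208 * (I1 + I2)) * Φ v := by rw [hΦdef]; ring
  calc eLpNorm (fun v => m v * A0 γ g v) p volume
      ≤ eLpNorm (fun v => (208 * (I1 + I2)) * Φ v) p volume := eLpNorm_mono_real hpt
    _ = ‖(208 * (I1 + I2))‖₊ * eLpNorm Φ p volume := by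
        rw [← enorm_eq_nnnorm, ← eLpNorm_const_smul (208 * (I1 + I2)) Φ p volume]
        · rfl
    _ ≤ ENNReal.ofReal (208 * (I1 + I2)) * ENNReal.ofReal (D + 1) := by
        refine mul_le_mul' ?_ hDD
        rw [← enorm_eq_nnnorm, ← ofReal_norm, Real.norm_eq_abs,
          abs_of_nonneg (by positivity : (0:ℝ) ≤ 208 * (I1 + I2))]
    _ = ENNReal.ofReal (208 * (D + 1) * (I1 + I2)) := by
        rw [← ENNReal.ofReal_mul (by positivity)]
        congr 1
        ring
end
end
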